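/- arXiv:2404.02554 — 3 statements merged into one kernel-verified Lean document; each statement's English description precedes it below -/
import Mathlib

section
/- Let μ be a probability measure on ℝ^d with finite covariance Cov_μ, and let W : ℝ^d → S⁺_d satisfy ∫ trace(W) dμ = trace(Cov_μ). Suppose the Riemannian Poincaré inequality holds with constant C(μ,W) = 1. Then the inequality is an equality for every affine function f, i.e., Var_μ(f) = ∫ ∇fᵀ W ∇f dμ for all affine f, and consequently ∫ W dμ = Cov_μ. -/
open MeasureTheory


lemma hasGradientAt_affine' {d : ℕ} (α : Fin d → ℝ) (b : ℝ) (x : EuclideanSpace ℝ (Fin d)) :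
    HasGradientAt (fun x : EuclideanSpace ℝ (Fin d) => ∑ i, α i * x i + b)
      ((WithLp.equiv 2 _).symm α) x := by
  have h : HasFDerivAt (fun y : EuclideanSpace ℝ (Fin d) =>
      (InnerProductSpace.toDual ℝ _ ((WithLp.equiv 2 _).symm α)) y + b)
      (InnerProductSpace.toDual ℝ _ ((WithLp.equiv 2 _).symm α)) x :=
    ((InnerProductSpace.toDual ℝ _ ((WithLp.equiv 2 _).symm α)).hasFDerivAt).add_const b
  have hfun : (fun x : EuclideanSpace ℝ (Fin d) => ∑ i, α i * x i + b)
      = fun y : EuclideanSpace ℝ (Fin d) =>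
      (InnerProductSpace.toDual ℝ _ ((WithLp.equiv 2 _).symm α)) y + b := by
    funext y
    simp [InnerProductSpace.toDual_apply_apply, PiLp.inner_apply, RCLike.inner_apply, mul_comm]
  rw [hasGradientAt_iff_hasFDerivAt, hfun]
  exact h

lemma contDiff_affine' {d : ℕ} (α : Fin d → ℝ) (b : ℝ) :
    ContDiff ℝ (⊤ : ℕ∞) (fun x : EuclideanSpace ℝ (Fin d) => ∑ i, α i * x i + b) := by
  apply ContDiff.add _ contDiff_const
  apply ContDiff.sum
  intro i _
  exact contDiff_const.mul ((contDiff_apply ℝ ℝ i).comp PiLp.contDiff_ofLp)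

lemma quadform_pair {d : ℕ} (A : Matrix (Fin d) (Fin d) ℝ) (i j : Fin d) (s t : ℝ) :
    ∑ i', ∑ j', ((if i' = i then s else 0) + (if i' = j then t else 0)) * A i' j' *
        ((if j' = i then s else 0) + (if j' = j then t else 0))
      = s*s*A i i + s*t*A i j + t*s*A j i + t*t*A j j := by
  simp [add_mul, mul_add, Finset.sum_add_distrib, Finset.sum_ite_eq',
    mul_ite, ite_mul]
  ring

lemma quadform_single {d : ℕ} (A : Matrix (Fin d) (Fin d) ℝ) (i : Fin d) :
    ∑ i', ∑ j', (if i' = i then (1:ℝ) else 0) * A i' j' * (if j' = i then (1:ℝ) else 0)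
      = A i i := by
  simp [Finset.sum_ite_eq', mul_ite, ite_mul]


/-- If `W` is a PSD matrix field with `∫ trace(W) dμ = trace(Cov_μ)` and the
Riemannian Poincaré inequality holds with constant `1`, then equality holds for every
affine function `f(x) = αᵀx + b`, and consequently `∫ W dμ = Cov_μ`. -/
theorem poincare_constant_one_equality_affine
    {d : ℕ}
    (μ : Measure (EuclideanSpace ℝ (Fin d))) [IsProbabilityMeasure μ]
    (W : EuclideanSpace ℝ (Fin d) → Matrix (Fin d) (Fin d) ℝ)
    (hW : ∀ x, (W x).PosSemidef)
    (m : Fin d → ℝ) (hm : ∀ i, m i = ∫ x, x i ∂μ)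
    (Cov : Matrix (Fin d) (Fin d) ℝ)
    (hCov : ∀ i j, Cov i j = ∫ x, (x i - m i) * (x j - m j) ∂μ)
    (hCovInt : ∀ i j, Integrable (fun x => (x i - m i) * (x j - m j)) μ)
    (hWInt : ∀ i j, Integrable (fun x => W x i j) μ)
    (hnorm : ∫ x, (W x).trace ∂μ = Cov.trace)
    (hPoin : ∀ f : EuclideanSpace ℝ (Fin d) → ℝ, ContDiff ℝ (⊤ : ℕ∞) f →
      ∫ x, (f x - ∫ y, f y ∂μ) ^ 2 ∂μ ≤
        ∫ x, ∑ i, ∑ j, gradient f x i * W x i j * gradient f x j ∂μ) :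
    (∀ (α : Fin d → ℝ) (b : ℝ),
      ∫ x, ((∑ i, α i * x i + b) - ∫ y, (∑ i, α i * y i + b) ∂μ) ^ 2 ∂μ =
        ∫ x, ∑ i, ∑ j, α i * W x i j * α j ∂μ) ∧
      (∀ i j, ∫ x, W x i j ∂μ = Cov i j) := by
  -- integrability of coordinates
  have measXi : ∀ i, AEStronglyMeasurable (fun x : EuclideanSpace ℝ (Fin d) => x i - m i) μ := by
    intro i
    exact ((EuclideanSpace.proj i).continuous.sub continuous_const).aestronglyMeasurable
  have intXi' : ∀ i, Integrable (fun x : EuclideanSpace ℝ (Fin d) => x i - m i) μ := by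
    intro i
    refine ((memLp_two_iff_integrable_sq (measXi i)).2 ?_).integrable one_le_two
    simpa [sq] using hCovInt i i
  have intAXi : ∀ (α : Fin d → ℝ) i,
      Integrable (fun x : EuclideanSpace ℝ (Fin d) => α i * x i) μ := by
    intro α i
    have : Integrable (fun x : EuclideanSpace ℝ (Fin d) => α i * ((x i - m i) + m i)) μ :=
      (((intXi' i).add (integrable_const (m i))).const_mul (α i))
    simpa using this
  -- mean of affine functions
  have mean : ∀ (α : Fin d → ℝ) (b : ℝ),
      ∫ y, (∑ i, α i * y i + b) ∂μ = ∑ i, α i * m i + b := by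
    intro α b
    rw [integral_add (integrable_finset_sum _ (fun i _ => intAXi α i)) (integrable_const b),
      integral_finset_sum _ (fun i _ => intAXi α i), integral_const]
    simp [integral_const_mul, hm]
  -- variance of affine functions
  have hVar : ∀ (α : Fin d → ℝ) (b : ℝ),
      ∫ x, ((∑ i, α i * x i + b) - ∫ y, (∑ i, α i * y i + b) ∂μ) ^ 2 ∂μ
        = ∑ i, ∑ j, α i * Cov i j * α j := by
    intro α b
    rw [mean]
    have h1 : ∀ x : EuclideanSpace ℝ (Fin d),
        ((∑ i, α i * x i + b) - (∑ i, α i * m i + b)) ^ 2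
          = ∑ i, ∑ j, α i * ((x i - m i) * (x j - m j)) * α j := by
      intro x
      rw [add_sub_add_right_eq_sub, ← Finset.sum_sub_distrib, sq, Finset.sum_mul_sum]
      refine Finset.sum_congr rfl fun i _ => Finset.sum_congr rfl fun j _ => by ring
    have hint : ∀ i j : Fin d,
        Integrable (fun x : EuclideanSpace ℝ (Fin d) =>
          α i * ((x i - m i) * (x j - m j)) * α j) μ :=
      fun i j => ((hCovInt i j).const_mul (α i)).mul_const (α j)
    calc ∫ x, ((∑ i, α i * x i + b) - (∑ i, α i * m i + b)) ^ 2 ∂μ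
        = ∫ x, ∑ i, ∑ j, α i * ((x i - m i) * (x j - m j)) * α j ∂μ := by
          exact integral_congr_ae (Filter.Eventually.of_forall h1)
      _ = ∑ i, ∑ j, α i * Cov i j * α j := by
          rw [integral_finset_sum _ (fun i _ => integrable_finset_sum _ (fun j _ => hint i j))]
          refine Finset.sum_congr rfl fun i _ => ?_
          rw [integral_finset_sum _ (fun j _ => hint i j)]
          refine Finset.sum_congr rfl fun j _ => ?_
          rw [integral_mul_const, integral_const_mul, hCov]
  -- RHS as quadratic form of ∫ W
  have hWq : ∀ (α : Fin d → ℝ) i,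
      Integrable (fun x : EuclideanSpace ℝ (Fin d) => ∑ j, α i * W x i j * α j) μ :=
    fun α i => integrable_finset_sum _ (fun j _ => ((hWInt i j).const_mul (α i)).mul_const (α j))
  have hRHS : ∀ α : Fin d → ℝ,
      ∫ x, ∑ i, ∑ j, α i * W x i j * α j ∂μ
        = ∑ i, ∑ j, α i * (∫ x, W x i j ∂μ) * α j := by
    intro α
    rw [integral_finset_sum _ (fun i _ => hWq α i)]
    refine Finset.sum_congr rfl fun i _ => ?_
    rw [integral_finset_sum _ (fun j _ => ((hWInt i j).const_mul (α i)).mul_const (α j))]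
    refine Finset.sum_congr rfl fun j _ => ?_
    rw [integral_mul_const, integral_const_mul]
  -- key inequality
  have key : ∀ α : Fin d → ℝ,
      ∑ i, ∑ j, α i * Cov i j * α j ≤ ∑ i, ∑ j, α i * (∫ x, W x i j ∂μ) * α j := by
    intro α
    have h := hPoin _ (contDiff_affine' α 0)
    have hg : ∀ x, gradient (fun x : EuclideanSpace ℝ (Fin d) => ∑ i, α i * x i + 0) x
        = (WithLp.equiv 2 _).symm α := fun x => (hasGradientAt_affine' α 0 x).gradient
    simp only [hg, WithLp.equiv_symm_apply, WithLp.ofLp_toLp] at h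
    rw [hVar α 0, hRHS α] at h
    exact h
  -- the difference matrix
  set M : Matrix (Fin d) (Fin d) ℝ :=
    Matrix.of fun i j => (∫ x, W x i j ∂μ) - Cov i j with hM
  have hMq : ∀ α : Fin d → ℝ, 0 ≤ ∑ i, ∑ j, α i * M i j * α j := by
    intro α
    have : ∑ i, ∑ j, α i * M i j * α j
        = (∑ i, ∑ j, α i * (∫ x, W x i j ∂μ) * α j) - ∑ i, ∑ j, α i * Cov i j * α j := by
      rw [← Finset.sum_sub_distrib]
      refine Finset.sum_congr rfl fun i _ => ?_
      rw [← Finset.sum_sub_distrib]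
      refine Finset.sum_congr rfl fun j _ => ?_
      simp only [hM, Matrix.of_apply]; ring
    rw [this]
    exact sub_nonneg.2 (key α)
  have hMeval : ∀ (i j : Fin d) (s t : ℝ),
      s*s*M i i + s*t*M i j + t*s*M j i + t*t*M j j
        = ∑ i', ∑ j', ((if i' = i then s else 0) + (if i' = j then t else 0)) * M i' j' *
            ((if j' = i then s else 0) + (if j' = j then t else 0)) :=
    fun i j s t => (quadform_pair M i j s t).symm
  have hMdiag_nonneg : ∀ i, 0 ≤ M i i := fun i =>
    (hMq (fun k => if k = i then (1:ℝ) else 0)).trans_eq (quadform_single M i)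
  -- trace of M is zero
  have htr : ∑ i, M i i = 0 := by
    have h1 : ∫ x, (W x).trace ∂μ = ∑ i, ∫ x, W x i i ∂μ := by
      simp only [Matrix.trace, Matrix.diag]
      exact integral_finset_sum _ (fun i _ => hWInt i i)
    have h2 : Cov.trace = ∑ i, Cov i i := rfl
    have h3 : ∑ i, ∫ x, W x i i ∂μ = ∑ i, Cov i i := by rw [← h1, hnorm, h2]
    simp only [hM, Matrix.of_apply, Finset.sum_sub_distrib, h3, sub_self]
  have hMdiag : ∀ i, M i i = 0 := by
    intro i
    have := (Finset.sum_eq_zero_iff_of_nonneg (fun i _ => hMdiag_nonneg i)).1 htr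
    exact this i (Finset.mem_univ i)
  -- symmetry of M
  have hMsymm : ∀ i j, M i j = M j i := by
    intro i j
    have hw : (∫ x, W x i j ∂μ) = ∫ x, W x j i ∂μ := by
      refine integral_congr_ae (Filter.Eventually.of_forall fun x => ?_)
      have := (hW x).1
      have h := congrFun (congrFun this i) j
      simpa [Matrix.conjTranspose_apply] using h.symm
    have hc : Cov i j = Cov j i := by
      rw [hCov, hCov]
      refine integral_congr_ae (Filter.Eventually.of_forall fun x => ?_)
      ring
    simp [hM, hw, hc]
  -- off-diagonal entries vanish
  have hMzero : ∀ i j, M i j = 0 := by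
    intro i j
    have hp : 0 ≤ 2 * M i j := by
      have h := (hMq (fun k => (if k = i then (1:ℝ) else 0) + (if k = j then 1 else 0))).trans_eq
        (quadform_pair M i j 1 1)
      rw [hMdiag i, hMdiag j, hMsymm j i] at h
      linarith
    have hn : 2 * M i j ≤ 0 := by
      have h := (hMq (fun k => (if k = i then (1:ℝ) else 0) + (if k = j then -1 else 0))).trans_eq
        (quadform_pair M i j 1 (-1))
      rw [hMdiag i, hMdiag j, hMsymm j i] at h
      linarith
    linarith
  have hWC : ∀ i j, ∫ x, W x i j ∂μ = Cov i j := by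
    intro i j
    have := hMzero i j
    simp only [hM, Matrix.of_apply] at this
    linarith
  refine ⟨fun α b => ?_, hWC⟩
  rw [hVar α b, hRHS α]
  exact Finset.sum_congr rfl fun i _ => Finset.sum_congr rfl fun j _ => by rw [hWC i j]
end

section
/- Let μ be a probability measure on ℝ^d with finite covariance, W : ℝ^d → S⁺_d with ∫ trace(W) dμ = trace(Cov_μ). If the Riemannian Poincaré inequality Var_μ(f) ≤ ∫ ∇fᵀ W ∇f dμ holds for all smooth f (constant 1) and it holds with equality for all affine functions, then W is a Stein kernel of μ: ∫ (x − m) f(x) dμ(x) = ∫ W(x) ∇f(x) dμ(x) for all smooth f, where m is the mean of μ. -/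
open MeasureTheory


open MeasureTheory Real Filter Topology
open scoped ENNReal

noncomputable section SteinAux

variable {d : ℕ}

private def Dco (f : EuclideanSpace ℝ (Fin d) → ℝ) (j : Fin d)
    (x : EuclideanSpace ℝ (Fin d)) : ℝ :=
  fderiv ℝ f x (EuclideanSpace.single j 1)

private lemma gradient_coord (f : EuclideanSpace ℝ (Fin d) → ℝ)
    (x : EuclideanSpace ℝ (Fin d)) (j : Fin d) :
    gradient f x j = Dco f j x := by
  have h1 : (inner ℝ (gradient f x) (EuclideanSpace.single j (1:ℝ)) : ℝ)
      = fderiv ℝ f x (EuclideanSpace.single j 1) := by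
    rw [gradient]; exact InnerProductSpace.toDual_symm_apply
  rw [EuclideanSpace.inner_single_right] at h1
  simpa [Dco] using h1

private lemma continuous_Dco {f : EuclideanSpace ℝ (Fin d) → ℝ}
    (hf : ContDiff ℝ (⊤ : ℕ∞) f) (j : Fin d) : Continuous (Dco f j) :=
  (ContinuousLinearMap.apply ℝ ℝ (EuclideanSpace.single j 1)).continuous.comp
    (hf.continuous_fderiv (by simp))

private lemma Dco_affine (i : Fin d) (h : ℝ) {g : EuclideanSpace ℝ (Fin d) → ℝ}
    (hg : ContDiff ℝ (⊤ : ℕ∞) g) (j : Fin d) (x : EuclideanSpace ℝ (Fin d)) :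
    Dco (fun y => y i + h * g y) j x = (if i = j then (1:ℝ) else 0) + h * Dco g j x := by
  have hgd : DifferentiableAt ℝ g x := (hg.differentiable (by simp)).differentiableAt
  have hproj : DifferentiableAt ℝ (fun y : EuclideanSpace ℝ (Fin d) => y i) x :=
    (EuclideanSpace.proj (𝕜 := ℝ) i).differentiableAt
  have hpf : fderiv ℝ (fun y : EuclideanSpace ℝ (Fin d) => y i) x
      = EuclideanSpace.proj (𝕜 := ℝ) i := (EuclideanSpace.proj (𝕜 := ℝ) i).fderiv
  unfold Dco
  rw [fderiv_fun_add hproj (hgd.const_mul h), fderiv_const_mul hgd h]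
  simp [hpf, EuclideanSpace.single_apply, eq_comm]

private lemma Dco_comp (φ : ℝ → ℝ) (hφ : Differentiable ℝ φ)
    {g : EuclideanSpace ℝ (Fin d) → ℝ} (hg : ContDiff ℝ (⊤ : ℕ∞) g) (j : Fin d)
    (x : EuclideanSpace ℝ (Fin d)) :
    Dco (fun y => φ (g y)) j x = deriv φ (g x) * Dco g j x := by
  have hgd : DifferentiableAt ℝ g x := (hg.differentiable (by simp)).differentiableAt
  have h2 : HasDerivAt φ (deriv φ (g x)) (g x) := (hφ (g x)).hasDerivAt
  have h3 : HasFDerivAt (fun y => φ (g y)) (deriv φ (g x) • fderiv ℝ g x) x :=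
    h2.comp_hasFDerivAt x hgd.hasFDerivAt
  unfold Dco
  rw [h3.fderiv]
  simp

private lemma quad_nonneg {M : Matrix (Fin d) (Fin d) ℝ} (hM : M.PosSemidef)
    (w : Fin d → ℝ) : 0 ≤ ∑ a, ∑ b, w a * M a b * w b := by
  have h := hM.dotProduct_mulVec_nonneg w
  simpa [dotProduct, Matrix.mulVec, Finset.mul_sum, mul_assoc] using h

private lemma quad_expand (M : Matrix (Fin d) (Fin d) ℝ)
    (hsym : ∀ a b, M a b = M b a) (i : Fin d) (h : ℝ) (w : Fin d → ℝ) :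
    ∑ a, ∑ b, ((if i = a then (1:ℝ) else 0) + h * w a) * M a b
        * ((if i = b then (1:ℝ) else 0) + h * w b)
      = M i i + 2*h*(∑ b, M i b * w b) + h^2 * ∑ a, ∑ b, w a * M a b * w b := by
  classical
  have key : ∀ a b : Fin d, ((if i = a then (1:ℝ) else 0) + h * w a) * M a b
      * ((if i = b then (1:ℝ) else 0) + h * w b)
      = (if i = a then (if i = b then M a b else 0) else 0)
        + ((if i = b then h * (w a * M a b) else 0)
        + ((if i = a then h * (M a b * w b) else 0)
        + h^2 * (w a * M a b * w b))) := by
    intro a b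
    by_cases h1 : i = a <;> by_cases h2 : i = b
    · simp only [if_pos h1, if_pos h2]; ring
    · simp only [if_pos h1, if_neg h2]; ring
    · simp only [if_neg h1, if_pos h2]; ring
    · simp only [if_neg h1, if_neg h2]; ring
  simp_rw [key, Finset.sum_add_distrib]
  have T1 : ∑ a, ∑ b, (if i = a then (if i = b then M a b else 0) else 0) = M i i := by
    simp [Finset.sum_ite_eq]
  have T2 : ∑ a : Fin d, ∑ b, (if i = b then h * (w a * M a b) else 0)
      = h * ∑ a, w a * M a i := by
    simp [Finset.sum_ite_eq, Finset.mul_sum]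
  have T3 : ∑ a, ∑ b, (if i = a then h * (M a b * w b) else 0)
      = h * ∑ b, M i b * w b := by
    simp [Finset.sum_ite_eq, Finset.mul_sum]
  have T5 : ∑ a, ∑ b, h^2 * (w a * M a b * w b)
      = h^2 * ∑ a, ∑ b, w a * M a b * w b := by
    simp [Finset.mul_sum]
  have T4 : ∑ a, w a * M a i = ∑ b, M i b * w b := by
    refine Finset.sum_congr rfl fun a _ => ?_
    rw [hsym a i, mul_comm]
  rw [T1, T2, T3, T4, T5]
  ring

private lemma Dco_comp' (φ φd : ℝ → ℝ) (hφ : ∀ t, HasDerivAt φ (φd t) t)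
    {g : EuclideanSpace ℝ (Fin d) → ℝ} (hg : ContDiff ℝ (⊤ : ℕ∞) g) (j : Fin d)
    (x : EuclideanSpace ℝ (Fin d)) :
    Dco (fun y => φ (g y)) j x = φd (g x) * Dco g j x := by
  have hgd : DifferentiableAt ℝ g x := (hg.differentiable (by simp)).differentiableAt
  have h3 : HasFDerivAt (fun y => φ (g y)) (φd (g x) • fderiv ℝ g x) x :=
    (hφ (g x)).comp_hasFDerivAt x hgd.hasFDerivAt
  unfold Dco
  rw [h3.fderiv]
  simp

private lemma scale_quad (M : Matrix (Fin d) (Fin d) ℝ) (c : ℝ) (w : Fin d → ℝ) :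
    ∑ a, ∑ b, (c * w a) * M a b * (c * w b) = c^2 * ∑ a, ∑ b, w a * M a b * w b := by
  rw [Finset.mul_sum]
  refine Finset.sum_congr rfl fun a _ => ?_
  rw [Finset.mul_sum]
  refine Finset.sum_congr rfl fun b _ => ?_
  ring

private lemma delta_trick (A R B Q : ℝ)
    (key : ∀ h : ℝ, 2*h*(A - R) + h^2*(B - Q) ≤ 0) : A = R := by
  have hk : (0:ℝ) < |B - Q| + 1 := by positivity
  have h1 := key ((A - R) / (|B - Q| + 1))
  have h2 : (2*((A-R)/(|B-Q|+1))*(A - R) + ((A-R)/(|B-Q|+1))^2*(B - Q))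
      * (|B-Q|+1)^2 = (A-R)^2*(2*(|B-Q|+1) + (B - Q)) := by
    field_simp
  have h3 := mul_le_mul_of_nonneg_right h1 (sq_nonneg (|B-Q|+1))
  rw [zero_mul, h2] at h3
  have h4 : 0 < 2*(|B-Q|+1) + (B-Q) := by
    have := neg_abs_le (B-Q); linarith
  have h5 : (A - R)^2 = 0 := by nlinarith [sq_nonneg (A - R)]
  have h6 : A - R = 0 := (pow_eq_zero_iff two_ne_zero).mp h5
  linarith





private lemma integrable_of_sq {μ : Measure (EuclideanSpace ℝ (Fin d))}
    [IsProbabilityMeasure μ] {g : EuclideanSpace ℝ (Fin d) → ℝ} {c : ℝ}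
    (hm : AEStronglyMeasurable g μ)
    (h2 : Integrable (fun x => (g x - c)^2) μ) : Integrable g μ := by
  have h3 : Integrable (fun x => g x - c) μ := by
    refine Integrable.mono' (h2.add (integrable_const 1))
      (hm.sub aestronglyMeasurable_const) (ae_of_all _ fun x => ?_)
    simp only [Real.norm_eq_abs, Pi.add_apply]
    nlinarith [sq_abs (g x - c), abs_nonneg (g x - c)]
  have h4 := h3.add (integrable_const c)
  have he : ((fun x => g x - c) + fun _ => c) = g := by funext x; simp
  rwa [he] at h4

private lemma integrable_mul_of_sq {μ : Measure (EuclideanSpace ℝ (Fin d))}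
    {a b : EuclideanSpace ℝ (Fin d) → ℝ}
    (ha : Integrable (fun x => (a x)^2) μ) (hb : Integrable (fun x => (b x)^2) μ)
    (ma : AEStronglyMeasurable a μ) (mb : AEStronglyMeasurable b μ) :
    Integrable (fun x => a x * b x) μ := by
  refine Integrable.mono' ((ha.add hb).const_mul (1/2)) (ma.mul mb)
    (ae_of_all _ fun x => ?_)
  simp only [Real.norm_eq_abs, Pi.add_apply, abs_mul]
  nlinarith [sq_nonneg (|a x| - |b x|), sq_abs (a x), sq_abs (b x), abs_nonneg (a x),
    abs_nonneg (b x)]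


private lemma tendsto_nsin (t : ℝ) :
    Tendsto (fun n : ℕ => ((n:ℝ)+1) * Real.sin (t / ((n:ℝ)+1))) atTop (𝓝 t) := by
  have hNpos : ∀ n : ℕ, (0:ℝ) < (n:ℝ)+1 := fun n => by positivity
  rcases eq_or_ne t 0 with h0 | h0
  · simpa [h0] using (tendsto_const_nhds : Tendsto (fun _ : ℕ => (0:ℝ)) atTop (𝓝 0))
  · have hN : Tendsto (fun n : ℕ => (n:ℝ)+1) atTop atTop :=
      tendsto_atTop_add_const_right _ 1 tendsto_natCast_atTop_atTop
    have hu : Tendsto (fun n : ℕ => t / ((n:ℝ)+1)) atTop (𝓝 0) :=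
      Tendsto.div_atTop tendsto_const_nhds hN
    have hu' : Tendsto (fun n : ℕ => t / ((n:ℝ)+1)) atTop (𝓝[≠] 0) := by
      rw [tendsto_nhdsWithin_iff]
      refine ⟨hu, Filter.Eventually.of_forall fun n => ?_⟩
      simp only [Set.mem_compl_iff, Set.mem_singleton_iff]
      exact div_ne_zero h0 (hNpos n).ne'
    have hslope : Tendsto (fun u : ℝ => Real.sin u / u) (𝓝[≠] 0) (𝓝 1) := by
      have hd := Real.hasDerivAt_sin 0
      rw [Real.cos_zero] at hd
      have h1 := hasDerivAt_iff_tendsto_slope.mp hd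
      refine h1.congr' ?_
      filter_upwards [self_mem_nhdsWithin] with u hu2
      rw [slope_def_field]
      simp
    have hcomp := hslope.comp hu'
    have hmul := hcomp.const_mul t
    rw [mul_one] at hmul
    refine hmul.congr fun n => ?_
    simp only [Function.comp_apply]
    field_simp

private lemma fatou_sq_integrable {E : Type*} [MeasurableSpace E] [TopologicalSpace E]
    [BorelSpace E]
    {μ : Measure E} [IsProbabilityMeasure μ]
    (f : E → ℝ) (hfc : Continuous f) (Qr : ℝ) (hQnn : 0 ≤ Qr)
    (gs : ℕ → E → ℝ) (hgc : ∀ n, Continuous (gs n))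
    (hgb : ∀ n x, |gs n x| ≤ (n:ℝ)+1)
    (hgfb : ∀ n x, |gs n x| ≤ |f x|)
    (hlim : ∀ x, Tendsto (fun n => gs n x) atTop (𝓝 (f x)))
    (hpo : ∀ n, ∫ x, (gs n x - ∫ y, gs n y ∂μ)^2 ∂μ ≤ Qr) :
    Integrable (fun x => (f x)^2) μ := by
  classical
  have hgn2 : ∀ n, Integrable (fun x => (gs n x - ∫ y, gs n y ∂μ)^2) μ := by
    intro n
    refine Integrable.mono' (integrable_const (((n:ℝ)+1 + |∫ y, gs n y ∂μ|)^2))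
      (((hgc n).sub continuous_const).pow 2).aestronglyMeasurable (ae_of_all _ fun x => ?_)
    rw [Real.norm_eq_abs, abs_of_nonneg (sq_nonneg _)]
    have h1 : |gs n x - ∫ y, gs n y ∂μ| ≤ (n:ℝ)+1 + |∫ y, gs n y ∂μ| := by
      rw [sub_eq_add_neg]
      refine (abs_add_le _ _).trans ?_
      rw [abs_neg]
      exact add_le_add_left (hgb n x) _
    calc (gs n x - ∫ y, gs n y ∂μ)^2 = |gs n x - ∫ y, gs n y ∂μ|^2 := (sq_abs _).symm
      _ ≤ ((n:ℝ)+1 + |∫ y, gs n y ∂μ|)^2 := by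
          apply pow_le_pow_left₀ (abs_nonneg _) h1
  -- a set of positive measure where |f| is bounded
  obtain ⟨C₀, hC₀⟩ : ∃ C : ℕ, 0 < μ {x | |f x| ≤ (C:ℝ)} := by
    by_contra hcon
    push_neg at hcon
    have hz : ∀ C : ℕ, μ {x | |f x| ≤ (C:ℝ)} = 0 := fun C =>
      le_antisymm (hcon C) zero_le
    have hu : (Set.univ : Set E) ⊆ ⋃ n : ℕ, {x | |f x| ≤ (n:ℝ)} := by
      intro x _
      obtain ⟨n, hn⟩ := exists_nat_ge (|f x|)
      exact Set.mem_iUnion.2 ⟨n, hn⟩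
    have h1 : (1:ℝ≥0∞) ≤ μ (⋃ n : ℕ, {x | |f x| ≤ (n:ℝ)}) := by
      rw [← measure_univ (μ := μ)]
      exact measure_mono hu
    have h2 : μ (⋃ n : ℕ, {x | |f x| ≤ (n:ℝ)}) = 0 := by
      refine le_antisymm ((measure_iUnion_le _).trans ?_) zero_le
      simp [hz]
    rw [h2] at h1
    simp at h1
  have hp : 0 < (μ {x | |f x| ≤ (C₀:ℝ)}).toReal :=
    ENNReal.toReal_pos hC₀.ne' (measure_ne_top μ _)
  obtain ⟨p, hpdef⟩ : ∃ p : ℝ, (μ {x | |f x| ≤ (C₀:ℝ)}).toReal = p := ⟨_, rfl⟩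
  rw [hpdef] at hp
  -- uniform bound on the means
  have hcb : ∀ n, |∫ y, gs n y ∂μ| ≤ (C₀:ℝ) + Real.sqrt (Qr/p) + 1 := by
    intro n
    by_contra hcon
    push_neg at hcon
    have hsub : {x | |f x| ≤ (C₀:ℝ)}
        ⊆ {x | (|∫ y, gs n y ∂μ| - C₀)^2 ≤ (gs n x - ∫ y, gs n y ∂μ)^2} := by
      intro x hx
      simp only [Set.mem_setOf_eq] at hx ⊢
      have h1 : |gs n x| ≤ (C₀:ℝ) := (hgfb n x).trans hx
      have h2 : |∫ y, gs n y ∂μ| - C₀ ≤ |gs n x - ∫ y, gs n y ∂μ| := by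
        have h3 : |∫ y, gs n y ∂μ| - |gs n x| ≤ |(∫ y, gs n y ∂μ) - gs n x| :=
          abs_sub_abs_le_abs_sub _ _
        rw [abs_sub_comm] at h3
        linarith
      have hnn : 0 ≤ |∫ y, gs n y ∂μ| - C₀ := by
        have := Real.sqrt_nonneg (Qr/p); linarith
      calc (|∫ y, gs n y ∂μ| - C₀)^2 ≤ |gs n x - ∫ y, gs n y ∂μ|^2 := by
            apply pow_le_pow_left₀ hnn h2
        _ = (gs n x - ∫ y, gs n y ∂μ)^2 := sq_abs _
    have hmarkov := mul_meas_ge_le_integral_of_nonneg (μ := μ)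
      (ae_of_all _ fun x => sq_nonneg (gs n x - ∫ y, gs n y ∂μ)) (hgn2 n)
      ((|∫ y, gs n y ∂μ| - C₀)^2)
    have hmm : p ≤ (μ {x | (|∫ y, gs n y ∂μ| - C₀)^2
        ≤ (gs n x - ∫ y, gs n y ∂μ)^2}).toReal := by
      rw [← hpdef]
      exact ENNReal.toReal_mono (measure_ne_top μ _) (measure_mono hsub)
    have hQge : (|∫ y, gs n y ∂μ| - C₀)^2 * p ≤ Qr := by
      calc (|∫ y, gs n y ∂μ| - C₀)^2 * p
          ≤ (|∫ y, gs n y ∂μ| - C₀)^2 * (μ {x | (|∫ y, gs n y ∂μ| - C₀)^2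
              ≤ (gs n x - ∫ y, gs n y ∂μ)^2}).toReal :=
            mul_le_mul_of_nonneg_left hmm (sq_nonneg _)
        _ ≤ ∫ x, (gs n x - ∫ y, gs n y ∂μ)^2 ∂μ := hmarkov
        _ ≤ Qr := hpo n
    have hs : Real.sqrt (Qr/p)^2 = Qr/p := Real.sq_sqrt (div_nonneg hQnn hp.le)
    have hqp : Qr/p * p = Qr := div_mul_cancel₀ Qr hp.ne'
    have key1 : (Real.sqrt (Qr/p) + 1)^2 ≤ (|∫ y, gs n y ∂μ| - C₀)^2 := by
      apply pow_le_pow_left₀ (by positivity) (by linarith)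
    have key2 := mul_le_mul_of_nonneg_right key1 hp.le
    nlinarith [key2, hQge, hqp, hp, Real.sqrt_nonneg (Qr/p),
      mul_le_mul_of_nonneg_right hs.le hp.le, mul_le_mul_of_nonneg_right hs.ge hp.le,
      mul_nonneg (Real.sqrt_nonneg (Qr/p)) hp.le]
  obtain ⟨M, hMdef⟩ : ∃ M : ℝ, (C₀:ℝ) + Real.sqrt (Qr/p) + 1 = M := ⟨_, rfl⟩
  rw [hMdef] at hcb
  have hMC : (C₀:ℝ) ≤ M := by
    rw [← hMdef]
    have := Real.sqrt_nonneg (Qr/p); linarith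
  -- Fatou
  have hptw : ∀ n x, (max (|gs n x| - M) 0)^2 ≤ (gs n x - ∫ y, gs n y ∂μ)^2 := by
    intro n x
    have h1 : max (|gs n x| - M) 0 ≤ |gs n x - ∫ y, gs n y ∂μ| := by
      apply max_le _ (abs_nonneg _)
      have h2 : |gs n x| - |∫ y, gs n y ∂μ| ≤ |gs n x - ∫ y, gs n y ∂μ| :=
        abs_sub_abs_le_abs_sub _ _
      linarith [hcb n]
    calc (max (|gs n x| - M) 0)^2 ≤ |gs n x - ∫ y, gs n y ∂μ|^2 :=
        pow_le_pow_left₀ (le_max_right _ _) h1 2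
      _ = (gs n x - ∫ y, gs n y ∂μ)^2 := sq_abs _
  have hlim2 : ∀ x, Tendsto (fun n => ENNReal.ofReal ((max (|gs n x| - M) 0)^2)) atTop
      (𝓝 (ENNReal.ofReal ((max (|f x| - M) 0)^2))) := by
    intro x
    apply (ENNReal.continuous_ofReal.tendsto _).comp
    have hcont : Continuous (fun t : ℝ => (max (|t| - M) 0)^2) :=
      ((continuous_abs.sub continuous_const).max continuous_const).pow 2
    exact (hcont.tendsto (f x)).comp (hlim x)
  have hliminf : ∀ x, ENNReal.ofReal ((max (|f x| - M) 0)^2)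
      ≤ liminf (fun n => ENNReal.ofReal ((gs n x - ∫ y, gs n y ∂μ)^2)) atTop := by
    intro x
    rw [← (hlim2 x).liminf_eq]
    exact Filter.liminf_le_liminf
      (Filter.Eventually.of_forall fun n => ENNReal.ofReal_le_ofReal (hptw n x))
  have hlint : ∫⁻ x, ENNReal.ofReal ((max (|f x| - M) 0)^2) ∂μ ≤ ENNReal.ofReal Qr := by
    have h1 := lintegral_mono (μ := μ) hliminf
    have h2 : ∫⁻ x, liminf (fun n => ENNReal.ofReal ((gs n x - ∫ y, gs n y ∂μ)^2)) atTop ∂μ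
        ≤ liminf (fun n => ∫⁻ x, ENNReal.ofReal ((gs n x - ∫ y, gs n y ∂μ)^2) ∂μ) atTop := by
      apply lintegral_liminf_le
      intro n
      exact (((hgc n).sub continuous_const).pow 2).measurable.ennreal_ofReal
    have h3 : ∀ n, ∫⁻ x, ENNReal.ofReal ((gs n x - ∫ y, gs n y ∂μ)^2) ∂μ
        ≤ ENNReal.ofReal Qr := by
      intro n
      rw [← ofReal_integral_eq_lintegral_ofReal (hgn2 n) (ae_of_all _ fun x => sq_nonneg _)]
      exact ENNReal.ofReal_le_ofReal (hpo n)
    have h4 : liminf (fun n => ∫⁻ x, ENNReal.ofReal ((gs n x - ∫ y, gs n y ∂μ)^2) ∂μ) atTop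
        ≤ ENNReal.ofReal Qr := by
      have h5 := Filter.liminf_le_liminf (f := (atTop : Filter ℕ)) (Filter.Eventually.of_forall h3)
      rwa [Filter.liminf_const] at h5
    exact h1.trans (h2.trans h4)
  have hZcont : Continuous (fun x => max (|f x| - M) 0) :=
    ((continuous_abs.comp hfc).sub continuous_const).max continuous_const
  have hZ2int : Integrable (fun x => (max (|f x| - M) 0)^2) μ := by
    refine ⟨(hZcont.pow 2).aestronglyMeasurable, ?_⟩
    rw [hasFiniteIntegral_iff_ofReal (ae_of_all _ fun x => sq_nonneg _)]
    exact lt_of_le_of_lt hlint ENNReal.ofReal_lt_top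
  have hb2 : Integrable (fun x => 2*((max (|f x| - M) 0)^2) + 2*M^2) μ := by
    exact (hZ2int.const_mul 2).add (integrable_const _)
  refine Integrable.mono' hb2 ((hfc.pow 2).aestronglyMeasurable) (ae_of_all _ fun x => ?_)
  rw [Real.norm_eq_abs, abs_of_nonneg (sq_nonneg _)]
  have h1 : |f x| ≤ max (|f x| - M) 0 + M := by
    have := le_max_left (|f x| - M) 0
    linarith
  have h2 : f x^2 ≤ (max (|f x| - M) 0 + M)^2 := by
    rw [← sq_abs]
    apply pow_le_pow_left₀ (abs_nonneg _) h1
  nlinarith [h2, sq_nonneg (max (|f x| - M) 0 - M)]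

end SteinAux

set_option maxHeartbeats 2000000 in
/-- If the Riemannian Poincaré inequality holds with constant `1` for all
smooth `f` and with equality for all affine functions, then `W` is a Stein kernel of `μ`:
`∫ (x - m) f dμ = ∫ W ∇f dμ` for all smooth `f`. -/
theorem poincare_constant_one_is_stein_kernel
    {d : ℕ}
    (μ : Measure (EuclideanSpace ℝ (Fin d))) [IsProbabilityMeasure μ]
    (W : EuclideanSpace ℝ (Fin d) → Matrix (Fin d) (Fin d) ℝ)
    (hW : ∀ x, (W x).PosSemidef)
    (m : Fin d → ℝ) (hm : ∀ i, m i = ∫ x, x i ∂μ)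
    (Cov : Matrix (Fin d) (Fin d) ℝ)
    (hCov : ∀ i j, Cov i j = ∫ x, (x i - m i) * (x j - m j) ∂μ)
    (hCovInt : ∀ i j, Integrable (fun x => (x i - m i) * (x j - m j)) μ)
    (hWInt : ∀ i j, Integrable (fun x => W x i j) μ)
    (hnorm : ∫ x, (W x).trace ∂μ = Cov.trace)
    -- Poincaré inequality with constant 1 for all smooth functions
    (hPoin : ∀ f : EuclideanSpace ℝ (Fin d) → ℝ, ContDiff ℝ (⊤ : ℕ∞) f →
      ∫ x, (f x - ∫ y, f y ∂μ) ^ 2 ∂μ ≤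
        ∫ x, ∑ i, ∑ j, gradient f x i * W x i j * gradient f x j ∂μ)
    -- equality holds for all affine functions
    (hAffEq : ∀ (α : Fin d → ℝ) (b : ℝ),
      ∫ x, ((∑ i, α i * x i + b) - ∫ y, (∑ i, α i * y i + b) ∂μ) ^ 2 ∂μ =
        ∫ x, ∑ i, ∑ j, α i * W x i j * α j ∂μ) :
    ∀ f : EuclideanSpace ℝ (Fin d) → ℝ, ContDiff ℝ (⊤ : ℕ∞) f →
      ∀ i, ∫ x, (x i - m i) * f x ∂μ = ∫ x, ∑ j, W x i j * gradient f x j ∂μ := by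
  intro f hf i
  classical
  have symW : ∀ x a b, W x a b = W x b a := fun x a b => by
    simpa using ((hW x).1.apply b a)
  have contX : Continuous (fun x : EuclideanSpace ℝ (Fin d) => x i - m i) :=
    by fun_prop
  have hX2 : Integrable (fun x => (x i - m i)^2) μ := by
    have h0 := hCovInt i i
    have he : (fun x : EuclideanSpace ℝ (Fin d) => (x i - m i) * (x i - m i))
        = fun x => (x i - m i)^2 := by funext x; ring
    rwa [he] at h0
  have hXi : Integrable (fun x : EuclideanSpace ℝ (Fin d) => x i) μ :=
    integrable_of_sq (by fun_prop : Continuous fun x : EuclideanSpace ℝ (Fin d) => x i).aestronglyMeasurable hX2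
  have hXint : Integrable (fun x : EuclideanSpace ℝ (Fin d) => x i - m i) μ :=
    hXi.sub (integrable_const _)
  have hXmean : ∫ x, (x i - m i) ∂μ = 0 := by
    rw [integral_sub hXi (integrable_const _), integral_const, ← hm i]
    simp
  -- quadratic form facts
  have hform : ∀ (g : EuclideanSpace ℝ (Fin d) → ℝ), ∀ (t : ℝ) (x : EuclideanSpace ℝ (Fin d)),
      0 ≤ W x i i + 2*t*(∑ j, W x i j * Dco g j x)
        + t^2 * (∑ a, ∑ b, Dco g a x * W x a b * Dco g b x) := by
    intro g t x
    rw [← quad_expand (W x) (symW x) i t (fun j => Dco g j x)]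
    exact quad_nonneg (hW x) _
  have qnonneg : ∀ (g : EuclideanSpace ℝ (Fin d) → ℝ) (x : EuclideanSpace ℝ (Fin d)),
      0 ≤ ∑ a, ∑ b, Dco g a x * W x a b * Dco g b x := fun g x =>
    quad_nonneg (hW x) _
  have unonneg : ∀ x, 0 ≤ W x i i := by
    intro x
    have h0 := hform f 0 x
    simpa using h0
  have measq : ∀ (g : EuclideanSpace ℝ (Fin d) → ℝ), ContDiff ℝ (⊤ : ℕ∞) g →
      AEStronglyMeasurable (fun x => ∑ a, ∑ b, Dco g a x * W x a b * Dco g b x) μ := by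
    intro g hg
    refine Finset.aestronglyMeasurable_fun_sum _ fun a _ => ?_
    refine Finset.aestronglyMeasurable_fun_sum _ fun b _ => ?_
    exact ((continuous_Dco hg a).aestronglyMeasurable.mul
      (hWInt a b).aestronglyMeasurable).mul (continuous_Dco hg b).aestronglyMeasurable
  have measv : ∀ (g : EuclideanSpace ℝ (Fin d) → ℝ), ContDiff ℝ (⊤ : ℕ∞) g →
      AEStronglyMeasurable (fun x => ∑ j, W x i j * Dco g j x) μ := by
    intro g hg
    refine Finset.aestronglyMeasurable_fun_sum _ fun j _ => ?_
    exact (hWInt i j).aestronglyMeasurable.mul (continuous_Dco hg j).aestronglyMeasurable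
  have intu : Integrable (fun x => W x i i) μ := hWInt i i
  -- D = ∫ W_ii via the affine equality
  have hDu : ∫ x, (x i - m i)^2 ∂μ = ∫ x, W x i i ∂μ := by
    have h0 := hAffEq (Pi.single i 1) 0
    simp only [Pi.single_apply, ite_mul, one_mul, zero_mul, mul_ite, mul_one, mul_zero,
      Finset.sum_ite_eq', Finset.mem_univ, if_true, add_zero] at h0
    rw [← hm i] at h0
    exact h0
  -- main expansion of the Poincaré inequality applied at x_i + h g
  have main_ineq : ∀ (g : EuclideanSpace ℝ (Fin d) → ℝ), ContDiff ℝ (⊤ : ℕ∞) g → ∀ (c : ℝ),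
      (∫ x, g x ∂μ = c) → Integrable (fun x => (g x - c)^2) μ → ∀ h : ℝ,
      (∫ x, (x i - m i)^2 ∂μ) + 2*h*(∫ x, (x i - m i)*(g x - c) ∂μ)
          + h^2*(∫ x, (g x - c)^2 ∂μ)
        ≤ ∫ x, (W x i i + 2*h*(∑ j, W x i j * Dco g j x)
            + h^2 * (∑ a, ∑ b, Dco g a x * W x a b * Dco g b x)) ∂μ := by
    intro g hg c hc hg2 h
    have hgm : AEStronglyMeasurable g μ := hg.continuous.aestronglyMeasurable
    have hgInt : Integrable g μ := integrable_of_sq hgm hg2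
    have hfn : ContDiff ℝ (⊤ : ℕ∞) (fun x : EuclideanSpace ℝ (Fin d) => x i + h * g x) := by
      have h1 : ContDiff ℝ (⊤ : ℕ∞) (fun x : EuclideanSpace ℝ (Fin d) => x i) :=
        (EuclideanSpace.proj (𝕜 := ℝ) i).contDiff
      exact h1.add (contDiff_const.mul hg)
    have hP := hPoin _ hfn
    simp only [] at hP
    have hmean : ∫ y, (y i + h * g y) ∂μ = m i + h * c := by
      rw [integral_add hXi (hgInt.const_mul h), integral_const_mul, hc, ← hm i]
    rw [hmean] at hP
    have hXg : Integrable (fun x => (x i - m i)*(g x - c)) μ :=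
      integrable_mul_of_sq hX2 hg2 contX.aestronglyMeasurable
        (hgm.sub aestronglyMeasurable_const)
    have eL : (fun x : EuclideanSpace ℝ (Fin d) => (x i + h * g x - (m i + h * c))^2)
        = fun x => (x i - m i)^2 + ((2*h)*((x i - m i)*(g x - c)) + (h^2)*((g x - c)^2)) := by
      funext x; ring
    rw [eL] at hP
    have hsum2 : Integrable (fun x => (2*h)*((x i - m i)*(g x - c)) + (h^2)*((g x - c)^2)) μ := by
      exact (hXg.const_mul (2*h)).add (hg2.const_mul (h^2))
    rw [integral_add hX2 hsum2, integral_add (hXg.const_mul (2*h)) (hg2.const_mul (h^2)),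
      integral_const_mul, integral_const_mul] at hP
    have eR : (fun x : EuclideanSpace ℝ (Fin d) => ∑ a, ∑ b,
        gradient (fun y => y i + h * g y) x a * W x a b
          * gradient (fun y => y i + h * g y) x b)
        = fun x => W x i i + 2*h*(∑ j, W x i j * Dco g j x)
            + h^2 * (∑ a, ∑ b, Dco g a x * W x a b * Dco g b x) := by
      funext x
      simp only [gradient_coord, Dco_affine i h hg]
      exact quad_expand (W x) (symW x) i h (fun j => Dco g j x)
    rw [eR] at hP
    linarith [hP]
  -- Lemma A : a smooth L² function with non-integrable energy forces degeneracy
  have keyA : ∀ (g : EuclideanSpace ℝ (Fin d) → ℝ), ContDiff ℝ (⊤ : ℕ∞) g → ∀ (c : ℝ),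
      (∫ x, g x ∂μ = c) → Integrable (fun x => (g x - c)^2) μ →
      ¬ Integrable (fun x => ∑ a, ∑ b, Dco g a x * W x a b * Dco g b x) μ →
      ∫ x, (x i - m i)^2 ∂μ ≤ 0 := by
    intro g hg c hc hg2 hqg
    have hqm := measq g hg
    have hzero : ∀ h : ℝ, h = 1 ∨ h = -1 →
        ∫ x, (W x i i + 2*h*(∑ j, W x i j * Dco g j x)
            + h^2 * (∑ a, ∑ b, Dco g a x * W x a b * Dco g b x)) ∂μ = 0 := by
      intro h hh
      apply integral_undef
      intro hint
      apply hqg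
      refine Integrable.mono' ((hint.const_mul 2).add (intu.const_mul 2)) hqm
        (ae_of_all _ fun x => ?_)
      have h1 := hform g (h/2) x
      have h2 : h^2 = 1 := by rcases hh with rfl | rfl <;> norm_num
      have h3 : (h/2)^2 = 1/4 := by rcases hh with rfl | rfl <;> norm_num
      rw [h3] at h1
      simp only [Real.norm_eq_abs, Pi.add_apply]
      rw [abs_of_nonneg (qnonneg g x)]
      nlinarith [qnonneg g x, unonneg x]
    have me1 := main_ineq g hg c hc hg2 1
    have me2 := main_ineq g hg c hc hg2 (-1)
    rw [hzero 1 (Or.inl rfl)] at me1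
    rw [hzero (-1) (Or.inr rfl)] at me2
    have hB : 0 ≤ ∫ x, (g x - c)^2 ∂μ := integral_nonneg fun x => sq_nonneg _
    nlinarith [me1, me2, hB]
  -- degenerate case : the variance in direction i vanishes
  have degenerate : ∫ x, (x i - m i)^2 ∂μ ≤ 0 →
      ∫ x, (x i - m i) * f x ∂μ = ∫ x, ∑ j, W x i j * gradient f x j ∂μ := by
    intro hD0
    have hDnn : 0 ≤ ∫ x, (x i - m i)^2 ∂μ := integral_nonneg fun x => sq_nonneg _
    have hD : ∫ x, (x i - m i)^2 ∂μ = 0 := le_antisymm hD0 hDnn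
    have hXae : (fun x : EuclideanSpace ℝ (Fin d) => (x i - m i)^2) =ᵐ[μ] 0 :=
      (integral_eq_zero_iff_of_nonneg (fun x => sq_nonneg _) hX2).mp hD
    have hXae' : ∀ᵐ x ∂μ, x i - m i = 0 := by
      refine hXae.mono fun x hx => ?_
      have : (x i - m i)^2 = 0 := hx
      exact (pow_eq_zero_iff two_ne_zero).mp this
    have hLHS : ∫ x, (x i - m i) * f x ∂μ = 0 := by
      have h0 : (fun x : EuclideanSpace ℝ (Fin d) => (x i - m i) * f x) =ᵐ[μ] 0 :=
        hXae'.mono fun x hx => by simp [hx]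
      rw [integral_congr_ae h0]
      simp
    have hu0 : ∫ x, W x i i ∂μ = 0 := by rw [← hDu]; exact hD
    have huae : (fun x => W x i i) =ᵐ[μ] 0 :=
      (integral_eq_zero_iff_of_nonneg unonneg intu).mp hu0
    have hvae : (fun x => ∑ j, W x i j * Dco f j x) =ᵐ[μ] 0 := by
      refine huae.mono fun x hx => ?_
      have hx0 : W x i i = 0 := hx
      set q := ∑ a, ∑ b, Dco f a x * W x a b * Dco f b x with hqdef
      set v := ∑ j, W x i j * Dco f j x with hvdef
      have hq0 : 0 ≤ q := qnonneg f x
      have ht := hform f (-v/(q+1)) x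
      rw [hx0] at ht
      have hq1 : (0:ℝ) < q + 1 := by linarith
      have hmul := mul_nonneg ht (sq_nonneg (q+1))
      have he : (0 + 2*(-v/(q+1))*v + (-v/(q+1))^2*q) * (q+1)^2 = -(v^2*(q+2)) := by
        field_simp
        ring
      rw [he] at hmul
      have hv2 : v^2 ≤ 0 := by nlinarith
      have : v = 0 := by nlinarith [sq_nonneg v]
      exact this
    have egr : (fun x : EuclideanSpace ℝ (Fin d) => ∑ j, W x i j * gradient f x j)
        = fun x => ∑ j, W x i j * Dco f j x := by
      funext x; simp [gradient_coord]
    have hRHS : ∫ x, ∑ j, W x i j * gradient f x j ∂μ = 0 := by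
      rw [egr, integral_congr_ae hvae]
      simp
    rw [hLHS, hRHS]
  by_cases hq : Integrable (fun x => ∑ a, ∑ b, Dco f a x * W x a b * Dco f b x) μ
  · by_cases hf2 : Integrable (fun x => (f x - ∫ y, f y ∂μ)^2) μ
    · -- main case : f is square-integrable and the energy is integrable
      set c := ∫ y, f y ∂μ with hcdef
      have hfm : AEStronglyMeasurable f μ := hf.continuous.aestronglyMeasurable
      have hXg : Integrable (fun x => (x i - m i)*(f x - c)) μ :=
        integrable_mul_of_sq hX2 hf2 contX.aestronglyMeasurable
          (hfm.sub aestronglyMeasurable_const)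
      have hbound : Integrable (fun x => W x i i
          + (1/4) * (∑ a, ∑ b, Dco f a x * W x a b * Dco f b x)) μ := by
        exact intu.add (hq.const_mul (1/4))
      have intv : Integrable (fun x => ∑ j, W x i j * Dco f j x) μ := by
        refine Integrable.mono' hbound (measv f hf) (ae_of_all _ fun x => ?_)
        have h1 := hform f (1/2) x
        have h2 := hform f (-(1/2)) x
        rw [Real.norm_eq_abs, abs_le]
        constructor <;> nlinarith [h1, h2]
      have hsplitR : ∀ h : ℝ, ∫ x, (W x i i + 2*h*(∑ j, W x i j * Dco f j x)
            + h^2 * (∑ a, ∑ b, Dco f a x * W x a b * Dco f b x)) ∂μ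
          = (∫ x, W x i i ∂μ) + 2*h*(∫ x, ∑ j, W x i j * Dco f j x ∂μ)
            + h^2*(∫ x, ∑ a, ∑ b, Dco f a x * W x a b * Dco f b x ∂μ) := by
        intro h
        have hs0 : Integrable (fun x => W x i i + 2*h*(∑ j, W x i j * Dco f j x)) μ := by
          exact intu.add (intv.const_mul (2*h))
        rw [integral_add hs0 (hq.const_mul (h^2)),
          integral_add intu (intv.const_mul (2*h)), integral_const_mul, integral_const_mul]
      have key : ∀ h : ℝ, 2*h*((∫ x, (x i - m i)*(f x - c) ∂μ)
            - (∫ x, ∑ j, W x i j * Dco f j x ∂μ))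
          + h^2*((∫ x, (f x - c)^2 ∂μ)
            - (∫ x, ∑ a, ∑ b, Dco f a x * W x a b * Dco f b x ∂μ)) ≤ 0 := by
        intro h
        have h1 := main_ineq f hf c hcdef.symm hf2 h
        have h2 := hsplitR h
        rw [h2] at h1
        linarith [hDu, h1]
      have hAR := delta_trick _ _ _ _ key
      have egr : (fun x : EuclideanSpace ℝ (Fin d) => ∑ j, W x i j * gradient f x j)
          = fun x => ∑ j, W x i j * Dco f j x := by
        funext x; simp [gradient_coord]
      have eln : (fun x : EuclideanSpace ℝ (Fin d) => (x i - m i) * f x)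
          = fun x => (x i - m i)*(f x - c) + c*(x i - m i) := by
        funext x; ring
      rw [egr, eln, integral_add hXg (hXint.const_mul c), integral_const_mul, hXmean,
        mul_zero, add_zero]
      exact hAR
    · exfalso
      apply hf2
      have hfm : AEStronglyMeasurable f μ := hf.continuous.aestronglyMeasurable
      have hQnn : 0 ≤ ∫ x, ∑ a, ∑ b, Dco f a x * W x a b * Dco f b x ∂μ :=
        integral_nonneg (fun x => qnonneg f x)
      have hgsm : ∀ n : ℕ, ContDiff ℝ (⊤ : ℕ∞)
          (fun x : EuclideanSpace ℝ (Fin d) => ((n:ℝ)+1) * Real.sin (f x / ((n:ℝ)+1))) :=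
        fun n => contDiff_const.mul (Real.contDiff_sin.comp (hf.div_const _))
      have hNpos : ∀ n : ℕ, (0:ℝ) < (n:ℝ)+1 := fun n => by positivity
      have hgb : ∀ (n : ℕ) (x : EuclideanSpace ℝ (Fin d)),
          |((n:ℝ)+1) * Real.sin (f x / ((n:ℝ)+1))| ≤ (n:ℝ)+1 := by
        intro n x
        rw [abs_mul, abs_of_pos (hNpos n)]
        have h1 : |Real.sin (f x / ((n:ℝ)+1))| ≤ 1 :=
          abs_le.mpr ⟨Real.neg_one_le_sin _, Real.sin_le_one _⟩
        nlinarith [hNpos n]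
      have hgfb : ∀ (n : ℕ) (x : EuclideanSpace ℝ (Fin d)),
          |((n:ℝ)+1) * Real.sin (f x / ((n:ℝ)+1))| ≤ |f x| := by
        intro n x
        calc |((n:ℝ)+1) * Real.sin (f x / ((n:ℝ)+1))|
            = ((n:ℝ)+1) * |Real.sin (f x / ((n:ℝ)+1))| := by
              rw [abs_mul, abs_of_pos (hNpos n)]
          _ ≤ ((n:ℝ)+1) * |f x / ((n:ℝ)+1)| :=
              mul_le_mul_of_nonneg_left Real.abs_sin_le_abs (hNpos n).le
          _ = |f x| := by
              rw [abs_div, abs_of_pos (hNpos n)]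
              field_simp
      have hpo : ∀ n : ℕ, ∫ x, (((n:ℝ)+1) * Real.sin (f x / ((n:ℝ)+1))
            - ∫ y, ((n:ℝ)+1) * Real.sin (f y / ((n:ℝ)+1)) ∂μ)^2 ∂μ
          ≤ ∫ x, ∑ a, ∑ b, Dco f a x * W x a b * Dco f b x ∂μ := by
        intro n
        have hP := hPoin _ (hgsm n)
        have egn : (fun x : EuclideanSpace ℝ (Fin d) => ∑ a, ∑ b,
            gradient (fun y => ((n:ℝ)+1) * Real.sin (f y / ((n:ℝ)+1))) x a * W x a b
              * gradient (fun y => ((n:ℝ)+1) * Real.sin (f y / ((n:ℝ)+1))) x b)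
            = fun x => Real.cos (f x / ((n:ℝ)+1))^2
              * (∑ a, ∑ b, Dco f a x * W x a b * Dco f b x) := by
          funext x
          have hphi : ∀ t : ℝ, HasDerivAt (fun t => ((n:ℝ)+1) * Real.sin (t / ((n:ℝ)+1)))
              (Real.cos (t / ((n:ℝ)+1))) t := by
            intro t
            have h1 : HasDerivAt (fun t : ℝ => t / ((n:ℝ)+1)) (1 / ((n:ℝ)+1)) t :=
              (hasDerivAt_id t).div_const _
            have h2 := (Real.hasDerivAt_sin (t / ((n:ℝ)+1))).comp t h1
            have h3 := h2.const_mul ((n:ℝ)+1)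
            refine h3.congr_deriv ?_
            field_simp
          have ed : ∀ j : Fin d,
              Dco (fun y => ((n:ℝ)+1) * Real.sin (f y / ((n:ℝ)+1))) j x
              = Real.cos (f x / ((n:ℝ)+1)) * Dco f j x := fun j => Dco_comp' _ _ hphi hf j x
          simp only [gradient_coord, ed]
          exact scale_quad (W x) _ _
        rw [egn] at hP
        have hqn_int : Integrable (fun x => Real.cos (f x / ((n:ℝ)+1))^2
            * (∑ a, ∑ b, Dco f a x * W x a b * Dco f b x)) μ := by
          refine Integrable.mono' hq
            (((Real.continuous_cos.comp ((hf.continuous).div_const _)).pow 2).aestronglyMeasurable.mul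
              (measq f hf))
            (ae_of_all _ fun x => ?_)
          rw [Real.norm_eq_abs, abs_of_nonneg (mul_nonneg (sq_nonneg _) (qnonneg f x))]
          exact mul_le_of_le_one_left (qnonneg f x) (Real.cos_sq_le_one _)
        have hle := integral_mono hqn_int hq
          (fun x => mul_le_of_le_one_left (qnonneg f x) (Real.cos_sq_le_one _))
        exact hP.trans hle
      have hf2' : Integrable (fun x => (f x)^2) μ :=
        fatou_sq_integrable f hf.continuous _ hQnn _
          (fun n => (hgsm n).continuous) hgb hgfb (fun x => tendsto_nsin (f x)) hpo
      have hfint : Integrable f μ := by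
        apply integrable_of_sq (c := 0) hfm
        have he : (fun x => (f x - 0)^2) = fun x => (f x)^2 := by funext x; ring
        rw [he]
        exact hf2'
      have he2 : (fun x : EuclideanSpace ℝ (Fin d) => (f x - ∫ y, f y ∂μ)^2)
          = fun x => (f x)^2 + ((-2*(∫ y, f y ∂μ))*(f x) + (∫ y, f y ∂μ)^2) := by
        funext x; ring
      rw [he2]
      have hrest : Integrable (fun x => (-2*(∫ y, f y ∂μ))*(f x) + (∫ y, f y ∂μ)^2) μ := by
        exact (hfint.const_mul _).add (integrable_const _)
      exact hf2'.add hrest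
  · -- one of sin ∘ f, cos ∘ f has non-integrable energy, forcing degeneracy
    apply degenerate
    have e1 : ∀ (j : Fin d) x, Dco (fun y => Real.sin (f y)) j x
        = Real.cos (f x) * Dco f j x := fun j x =>
      Dco_comp' Real.sin Real.cos Real.hasDerivAt_sin hf j x
    have e2 : ∀ (j : Fin d) x, Dco (fun y => Real.cos (f y)) j x
        = (-Real.sin (f x)) * Dco f j x := fun j x =>
      Dco_comp' Real.cos (fun t => -Real.sin t) Real.hasDerivAt_cos hf j x
    have hdecomp : ∀ x, (∑ a, ∑ b, Dco (fun y => Real.sin (f y)) a x * W x a b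
          * Dco (fun y => Real.sin (f y)) b x)
        + (∑ a, ∑ b, Dco (fun y => Real.cos (f y)) a x * W x a b
          * Dco (fun y => Real.cos (f y)) b x)
        = ∑ a, ∑ b, Dco f a x * W x a b * Dco f b x := by
      intro x
      simp only [e1, e2]
      rw [scale_quad (W x) (Real.cos (f x)) (fun j => Dco f j x),
        scale_quad (W x) (-Real.sin (f x)) (fun j => Dco f j x), ← add_mul]
      have hpyth : Real.cos (f x)^2 + (-Real.sin (f x))^2 = 1 := by
        have := Real.sin_sq_add_cos_sq (f x); nlinarith [this]
      rw [hpyth, one_mul]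
    have hone : ¬ Integrable (fun x => ∑ a, ∑ b, Dco (fun y => Real.sin (f y)) a x
          * W x a b * Dco (fun y => Real.sin (f y)) b x) μ
        ∨ ¬ Integrable (fun x => ∑ a, ∑ b, Dco (fun y => Real.cos (f y)) a x
          * W x a b * Dco (fun y => Real.cos (f y)) b x) μ := by
      by_contra hcon
      push_neg at hcon
      apply hq
      have hsum : Integrable (fun x => (∑ a, ∑ b, Dco (fun y => Real.sin (f y)) a x
            * W x a b * Dco (fun y => Real.sin (f y)) b x)
          + (∑ a, ∑ b, Dco (fun y => Real.cos (f y)) a x * W x a b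
            * Dco (fun y => Real.cos (f y)) b x)) μ := by
        exact hcon.1.add hcon.2
      have he : (fun x => (∑ a, ∑ b, Dco (fun y => Real.sin (f y)) a x
            * W x a b * Dco (fun y => Real.sin (f y)) b x)
          + (∑ a, ∑ b, Dco (fun y => Real.cos (f y)) a x * W x a b
            * Dco (fun y => Real.cos (f y)) b x))
          = fun x => ∑ a, ∑ b, Dco f a x * W x a b * Dco f b x := funext hdecomp
      rwa [he] at hsum
    have hbdd : ∀ (g : EuclideanSpace ℝ (Fin d) → ℝ), Continuous g → (∀ x, |g x| ≤ 1) →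
        Integrable (fun x => (g x - ∫ y, g y ∂μ)^2) μ := by
      intro g hgc hgb
      set cg := ∫ y, g y ∂μ
      refine Integrable.mono' (integrable_const ((1 + |cg|)^2))
        (((hgc.sub continuous_const).pow 2).aestronglyMeasurable) (ae_of_all _ fun x => ?_)
      rw [Real.norm_eq_abs, abs_of_nonneg (sq_nonneg _)]
      have h1 : |g x - cg| ≤ 1 + |cg| := by
        rw [sub_eq_add_neg]
        refine (abs_add_le _ _).trans ?_
        rw [abs_neg]
        exact add_le_add_left (hgb x) _
      calc (g x - cg)^2 = |g x - cg|^2 := (sq_abs _).symm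
        _ ≤ (1 + |cg|)^2 := by apply pow_le_pow_left₀ (abs_nonneg _) h1
    rcases hone with hbad | hbad
    · refine keyA _ (Real.contDiff_sin.comp hf) _ rfl
        (hbdd _ (Real.continuous_sin.comp hf.continuous) (fun x => ?_)) hbad
      exact abs_le.mpr ⟨Real.neg_one_le_sin _, Real.sin_le_one _⟩
    · refine keyA _ (Real.contDiff_cos.comp hf) _ rfl
        (hbdd _ (Real.continuous_cos.comp hf.continuous) (fun x => ?_)) hbad
      exact abs_le.mpr ⟨Real.neg_one_le_cos _, Real.cos_le_one _⟩
end

section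
/- Let μ be a centered probability measure on ℝ^d with covariance Cov_μ, and let W : ℝ^d → S⁺_d be a Stein kernel of μ satisfying the Riemannian Poincaré inequality with constant 1. Then for any smooth f, (∫ W∇f dμ)ᵀ (Cov_μ)^{-1} (∫ W∇f dμ) ≤ Var_μ(f) ≤ ∫ ∇fᵀ W ∇f dμ, where Cov_μ is assumed invertible. -/
open MeasureTheory
open Filter

namespace SteinAux

variable {d : ℕ}

local notation "E" => EuclideanSpace ℝ (Fin d)

lemma grad_coord (f : E → ℝ) (x : E) (k : Fin d) :
    gradient f x k = fderiv ℝ f x (EuclideanSpace.single k 1) := by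
  have h1 : (gradient f x) k =
      inner (𝕜 := ℝ) (gradient f x) (EuclideanSpace.single k (1 : ℝ)) := by
    rw [EuclideanSpace.inner_single_right]
    simp
  rw [h1]
  exact InnerProductSpace.toDual_symm_apply

lemma lin_eq_clm (α : Fin d → ℝ) :
    (fun y : E => ∑ i, α i * y i)
      = fun y => (∑ i, α i • (EuclideanSpace.proj i : E →L[ℝ] ℝ)) y := by
  funext y
  simp [ContinuousLinearMap.sum_apply]

lemma lin_contDiff (α : Fin d → ℝ) : ContDiff ℝ (⊤ : ℕ∞) (fun y : E => ∑ i, α i * y i) := by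
  rw [lin_eq_clm α]
  exact (∑ i, α i • (EuclideanSpace.proj i : E →L[ℝ] ℝ)).contDiff

lemma grad_add_lin {f : E → ℝ} {x : E} (hdf : DifferentiableAt ℝ f x) {φ φ' : ℝ → ℝ}
    (hφ : ∀ t, HasDerivAt φ (φ' t) t) (α : Fin d → ℝ) (s : ℝ) (k : Fin d) :
    gradient (fun y => φ (f y) + s * ∑ i, α i * y i) x k
      = φ' (f x) * gradient f x k + s * α k := by
  classical
  set L : E →L[ℝ] ℝ := ∑ i, α i • (EuclideanSpace.proj i : E →L[ℝ] ℝ) with hL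
  have hu : HasFDerivAt (fun y : E => ∑ i, α i * y i) L x := by
    rw [lin_eq_clm α]
    exact L.hasFDerivAt
  have hsu : HasFDerivAt (fun y : E => s * ∑ i, α i * y i) (s • L) x := hu.const_mul s
  have hφf : HasFDerivAt (fun y => φ (f y)) (φ' (f x) • fderiv ℝ f x) x :=
    (hφ (f x)).comp_hasFDerivAt x hdf.hasFDerivAt
  have hsum : HasFDerivAt (fun y => φ (f y) + s * ∑ i, α i * y i) _ x := hφf.add hsu
  rw [grad_coord, hsum.fderiv]
  have hLapp : L (EuclideanSpace.single k 1) = α k := by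
    simp [hL, ContinuousLinearMap.sum_apply, EuclideanSpace.single_apply]
  simp [ContinuousLinearMap.add_apply, ContinuousLinearMap.smul_apply, hLapp, ← grad_coord,
    smul_eq_mul]

lemma grad_comp {f : E → ℝ} {x : E} (hdf : DifferentiableAt ℝ f x) {φ φ' : ℝ → ℝ}
    (hφ : ∀ t, HasDerivAt φ (φ' t) t) (k : Fin d) :
    gradient (fun y => φ (f y)) x k = φ' (f x) * gradient f x k := by
  have h := grad_add_lin hdf hφ (fun _ => (0:ℝ)) 0 k
  simpa using h

lemma q_nonneg {W : E → Matrix (Fin d) (Fin d) ℝ} (hW : ∀ x, (W x).PosSemidef)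
    (f : E → ℝ) (x : E) :
    0 ≤ ∑ i, ∑ j, gradient f x i * W x i j * gradient f x j := by
  have h := (hW x).dotProduct_mulVec_nonneg (fun i => gradient f x i)
  simpa [dotProduct, Matrix.mulVec, Finset.mul_sum, mul_assoc] using h

lemma bounded_integrable {X : Type*} [MeasurableSpace X] [TopologicalSpace X]
    [OpensMeasurableSpace X]
    (μ : Measure X) [IsFiniteMeasure μ] {F : X → ℝ} (hc : Continuous F)
    {M : ℝ} (hb : ∀ x, |F x| ≤ M) : Integrable F μ :=
  (integrable_const M).mono' hc.aestronglyMeasurable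
    (Eventually.of_forall (fun x => by simpa using hb x))

lemma mul_integrable_of_sq {X : Type*} [MeasurableSpace X] (μ : Measure X)
    {F G : X → ℝ} (hF2 : Integrable (fun x => F x * F x) μ)
    (hG2 : Integrable (fun x => G x * G x) μ)
    (hFm : AEStronglyMeasurable F μ) (hGm : AEStronglyMeasurable G μ) :
    Integrable (fun x => F x * G x) μ := by
  refine ((hF2.add hG2).div_const 2).mono' (hFm.mul hGm)
    (Eventually.of_forall fun x => ?_)
  simp only [Pi.add_apply]
  rw [Real.norm_eq_abs, abs_mul]
  nlinarith [sq_nonneg (|F x| - |G x|), abs_mul_abs_self (F x), abs_mul_abs_self (G x),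
    abs_nonneg (F x), abs_nonneg (G x)]


lemma aux2b (μ : Measure E) [IsProbabilityMeasure μ]
    (W : E → Matrix (Fin d) (Fin d) ℝ)
    (f : E → ℝ) (hf : ContDiff ℝ (⊤ : ℕ∞) f)
    (hPoin : ∀ h : E → ℝ, ContDiff ℝ (⊤ : ℕ∞) h →
      ∫ x, (h x - ∫ y, h y ∂μ) ^ 2 ∂μ ≤
        ∫ x, ∑ i, ∑ j, gradient h x i * W x i j * gradient h x j ∂μ)
    (α : Fin d → ℝ)
    (hu1 : Integrable (fun x : E => ∑ i, α i * x i) μ)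
    (hu2 : Integrable (fun x : E => (∑ i, α i * x i) * (∑ i, α i * x i)) μ)
    (hu0 : ∫ x, (∑ i, α i * x i) ∂μ = 0)
    (hupos : 0 < ∫ x, (∑ i, α i * x i) * (∑ i, α i * x i) ∂μ)
    (φ φ' : ℝ → ℝ) (hφc : ContDiff ℝ (⊤ : ℕ∞) φ)
    (hφd : ∀ t, HasDerivAt φ (φ' t) t)
    (M : ℝ) (hφb : ∀ t, |φ t| ≤ M)
    (hC : ¬ Integrable (fun x => (φ' (f x))^2 *
        ∑ i, ∑ j, gradient f x i * W x i j * gradient f x j) μ) :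
    False := by
  classical
  set c := ∫ x, φ (f x) ∂μ with hc
  set Tu := ∫ x, (∑ i, α i * x i) * (∑ i, α i * x i) ∂μ with hTu
  set A := ∫ x, (φ (f x) - c)^2 ∂μ with hA
  set b := ∫ x, (φ (f x) - c) * (∑ i, α i * x i) ∂μ with hb
  have hφcont : Continuous fun x : E => φ (f x) := hφc.continuous.comp hf.continuous
  have hφfInt : Integrable (fun x => φ (f x)) μ := bounded_integrable μ hφcont (fun x => hφb (f x))
  have hbd : ∀ x : E, |φ (f x) - c| ≤ M + |c| := by
    intro x
    have h1 := abs_add_le (φ (f x)) (-c)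
    rw [abs_neg] at h1
    rw [sub_eq_add_neg]
    exact h1.trans (by linarith [hφb (f x)])
  have hφc2 : Integrable (fun x => (φ (f x) - c)^2) μ := by
    refine bounded_integrable μ ((hφcont.sub continuous_const).pow 2)
      (M := (M + |c|)^2) fun x => ?_
    rw [abs_of_nonneg (sq_nonneg _)]
    calc (φ (f x) - c)^2 = |φ (f x) - c|^2 := (sq_abs _).symm
      _ ≤ (M + |c|)^2 := by
          have := hbd x
          have h0 : (0:ℝ) ≤ |φ (f x) - c| := abs_nonneg _
          nlinarith
  have hbInt : Integrable (fun x => (φ (f x) - c) * (∑ i, α i * x i)) μ :=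
    hu1.bdd_mul (hφcont.sub continuous_const).aestronglyMeasurable
      (c := M + |c|) (Eventually.of_forall fun x => by simpa using hbd x)
  have hlin_cd : ∀ s : ℝ, ContDiff ℝ (⊤ : ℕ∞) (fun x : E => φ (f x) + s * ∑ i, α i * x i) :=
    fun s => (hφc.comp hf).add (contDiff_const.mul (lin_contDiff α))
  have hmean_s : ∀ s : ℝ, ∫ x, (φ (f x) + s * ∑ i, α i * x i) ∂μ = c := by
    intro s
    rw [integral_add hφfInt (hu1.const_mul s), integral_const_mul, hu0, mul_zero, add_zero]
  have hgr : ∀ (s : ℝ) (x : E) (k : Fin d),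
      gradient (fun y => φ (f y) + s * ∑ i, α i * y i) x k
        = φ' (f x) * gradient f x k + s * α k :=
    fun s x k => grad_add_lin (hf.differentiable (by simp) x) hφd α s k
  have key : ∀ s : ℝ,
      ¬ Integrable (fun x => ∑ i, ∑ j,
          gradient (fun y => φ (f y) + s * ∑ i', α i' * y i') x i * W x i j *
          gradient (fun y => φ (f y) + s * ∑ i', α i' * y i') x j) μ →
      A + 2*s*b + s^2*Tu ≤ 0 := by
    intro s hint
    have h1 := hPoin _ (hlin_cd s)
    rw [integral_undef hint] at h1
    rw [hmean_s s] at h1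
    have h2 : ∫ x, (φ (f x) + s * ∑ i, α i * x i - c)^2 ∂μ = A + 2*s*b + s^2*Tu := by
      have hpt : (fun x : E => (φ (f x) + s * ∑ i, α i * x i - c)^2)
          = fun x => (φ (f x) - c)^2 + (2*s) * ((φ (f x) - c) * (∑ i, α i * x i))
              + s^2 * ((∑ i, α i * x i) * (∑ i, α i * x i)) := by
        funext x; ring
      have hI2 : Integrable (fun x : E => s^2 * ((∑ i, α i * x i) * (∑ i, α i * x i))) μ :=
        hu2.const_mul (s^2)
      have hIb : Integrable (fun x : E => (2*s) * ((φ (f x) - c) * (∑ i, α i * x i))) μ :=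
        hbInt.const_mul (2*s)
      have hI1 : Integrable (fun x : E => (φ (f x) - c)^2
          + (2*s) * ((φ (f x) - c) * (∑ i, α i * x i))) μ := hφc2.add hIb
      rw [hpt, integral_add hI1 hI2, integral_add hφc2 hIb, integral_const_mul, integral_const_mul,
          hA, hb, hTu]
    rw [h2] at h1
    exact h1
  have hcomb : ∀ σ : ℝ,
      (fun x => (φ' (f x))^2 * ∑ i, ∑ j, gradient f x i * W x i j * gradient f x j)
      = fun x => 3 * (∑ i, ∑ j,
            gradient (fun y => φ (f y) + σ * ∑ i', α i' * y i') x i * W x i j *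
            gradient (fun y => φ (f y) + σ * ∑ i', α i' * y i') x j)
          - 3 * (∑ i, ∑ j,
            gradient (fun y => φ (f y) + (2*σ) * ∑ i', α i' * y i') x i * W x i j *
            gradient (fun y => φ (f y) + (2*σ) * ∑ i', α i' * y i') x j)
          + (∑ i, ∑ j,
            gradient (fun y => φ (f y) + (3*σ) * ∑ i', α i' * y i') x i * W x i j *
            gradient (fun y => φ (f y) + (3*σ) * ∑ i', α i' * y i') x j) := by
    intro σ; funext x
    simp only [hgr]
    simp only [Finset.mul_sum, ← Finset.sum_sub_distrib, ← Finset.sum_add_distrib]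
    exact Finset.sum_congr rfl fun i _ => Finset.sum_congr rfl fun j _ => by ring
  have main : ∀ σ : ℝ, ∃ s : ℝ, (s = σ ∨ s = 2*σ ∨ s = 3*σ) ∧ A + 2*s*b + s^2*Tu ≤ 0 := by
    intro σ
    by_cases h1 : Integrable (fun x => ∑ i, ∑ j,
        gradient (fun y => φ (f y) + σ * ∑ i', α i' * y i') x i * W x i j *
        gradient (fun y => φ (f y) + σ * ∑ i', α i' * y i') x j) μ
    · by_cases h2 : Integrable (fun x => ∑ i, ∑ j,
          gradient (fun y => φ (f y) + (2*σ) * ∑ i', α i' * y i') x i * W x i j *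
          gradient (fun y => φ (f y) + (2*σ) * ∑ i', α i' * y i') x j) μ
      · by_cases h3 : Integrable (fun x => ∑ i, ∑ j,
            gradient (fun y => φ (f y) + (3*σ) * ∑ i', α i' * y i') x i * W x i j *
            gradient (fun y => φ (f y) + (3*σ) * ∑ i', α i' * y i') x j) μ
        · exfalso
          apply hC
          rw [hcomb σ]
          exact ((h1.const_mul 3).sub (h2.const_mul 3)).add h3
        · exact ⟨3*σ, Or.inr (Or.inr rfl), key (3*σ) h3⟩
      · exact ⟨2*σ, Or.inr (Or.inl rfl), key (2*σ) h2⟩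
    · exact ⟨σ, Or.inl rfl, key σ h1⟩
  obtain ⟨s₁, hs₁, hP₁⟩ := main 1
  obtain ⟨s₂, hs₂, hP₂⟩ := main (-1)
  have hA0 : 0 ≤ A := by rw [hA]; exact integral_nonneg fun x => sq_nonneg _
  rcases hs₁ with rfl|rfl|rfl <;> rcases hs₂ with rfl|rfl|rfl <;>
    [skip; skip; skip; skip; skip; skip; skip; skip; skip] <;>
    nlinarith [hupos, hA0, hP₁, hP₂]


lemma aux2a (μ : Measure E) [IsProbabilityMeasure μ]
    (W : E → Matrix (Fin d) (Fin d) ℝ) (hW : ∀ x, (W x).PosSemidef)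
    (f : E → ℝ) (hf : ContDiff ℝ (⊤ : ℕ∞) f)
    (hPoin : ∀ h : E → ℝ, ContDiff ℝ (⊤ : ℕ∞) h →
      ∫ x, (h x - ∫ y, h y ∂μ) ^ 2 ∂μ ≤
        ∫ x, ∑ i, ∑ j, gradient h x i * W x i j * gradient h x j ∂μ)
    (hq : Integrable (fun x => ∑ i, ∑ j, gradient f x i * W x i j * gradient f x j) μ) :
    Integrable (fun x => (f x - ∫ y, f y ∂μ)^2) μ := by
  classical
  have hconti : Continuous f := hf.continuous
  set K := ∫ x, (∑ i, ∑ j, gradient f x i * W x i j * gradient f x j) ∂μ with hK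
  have hknz : ∀ k : ℕ, ((k:ℝ)+1) ≠ 0 := fun k => by positivity
  have harct : ∀ u : ℝ, |Real.arctan u| ≤ Real.pi/2 := fun u =>
    le_of_lt (abs_lt.2 ⟨Real.neg_pi_div_two_lt_arctan u, Real.arctan_lt_pi_div_two u⟩)
  have hφd : ∀ (k : ℕ) (t : ℝ),
      HasDerivAt (fun t : ℝ => ((k:ℝ)+1) * Real.arctan (t / ((k:ℝ)+1)))
        ((1 + (t/((k:ℝ)+1))^2)⁻¹) t := by
    intro k t
    have h1 : HasDerivAt (fun t : ℝ => t / ((k:ℝ)+1)) (1/((k:ℝ)+1)) t := by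
      simpa using (hasDerivAt_id t).div_const ((k:ℝ)+1)
    have h2 := (Real.hasDerivAt_arctan (t/((k:ℝ)+1))).comp t h1
    have h3 := h2.const_mul ((k:ℝ)+1)
    have h4 : HasDerivAt (fun t : ℝ => ((k:ℝ)+1) * Real.arctan (t/((k:ℝ)+1)))
        (((k:ℝ)+1) * (1 / (1 + (t/((k:ℝ)+1))^2) * (1/((k:ℝ)+1)))) t := by
      simpa [Function.comp] using h3
    convert h4 using 1
    field_simp
  have hcdk : ∀ k : ℕ, ContDiff ℝ (⊤ : ℕ∞) (fun x : E => ((k:ℝ)+1) * Real.arctan (f x / ((k:ℝ)+1))) :=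
    fun k => contDiff_const.mul (Real.contDiff_arctan.comp (hf.div_const _))
  have hgr : ∀ (k : ℕ) (x : E) (i : Fin d),
      gradient (fun y => ((k:ℝ)+1) * Real.arctan (f y / ((k:ℝ)+1))) x i
        = (1 + (f x/((k:ℝ)+1))^2)⁻¹ * gradient f x i :=
    fun k x i => grad_comp (hf.differentiable (by simp) x) (hφd k) i
  have hqnn : ∀ x : E, 0 ≤ ∑ i, ∑ j, gradient f x i * W x i j * gradient f x j := fun x => q_nonneg hW f x
  have hVk : ∀ k : ℕ, ∫ x, ((((k:ℝ)+1) * Real.arctan (f x / ((k:ℝ)+1))) - (∫ y, ((k:ℝ)+1) * Real.arctan (f y / ((k:ℝ)+1)) ∂μ))^2 ∂μ ≤ K := by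
    intro k
    have h1 := hPoin (fun x : E => ((k:ℝ)+1) * Real.arctan (f x / ((k:ℝ)+1))) (hcdk k)
    simp only [hgr] at h1
    refine h1.trans ?_
    rw [hK]
    refine integral_mono_of_nonneg (Eventually.of_forall fun x => ?_) hq
      (Eventually.of_forall fun x => ?_)
    · have hs : ∑ i, ∑ j, (1 + (f x/((k:ℝ)+1))^2)⁻¹ * gradient f x i * W x i j *
          ((1 + (f x/((k:ℝ)+1))^2)⁻¹ * gradient f x j)
          = ((1 + (f x/((k:ℝ)+1))^2)⁻¹)^2 * (∑ i, ∑ j, gradient f x i * W x i j * gradient f x j) := by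
        simp only [Finset.mul_sum]
        exact Finset.sum_congr rfl fun i _ => Finset.sum_congr rfl fun j _ => by ring
      simp only [Pi.zero_apply]
      rw [hs]
      exact mul_nonneg (sq_nonneg _) (hqnn x)
    · have hs : ∑ i, ∑ j, (1 + (f x/((k:ℝ)+1))^2)⁻¹ * gradient f x i * W x i j *
          ((1 + (f x/((k:ℝ)+1))^2)⁻¹ * gradient f x j)
          = ((1 + (f x/((k:ℝ)+1))^2)⁻¹)^2 * (∑ i, ∑ j, gradient f x i * W x i j * gradient f x j) := by
        simp only [Finset.mul_sum]
        exact Finset.sum_congr rfl fun i _ => Finset.sum_congr rfl fun j _ => by ring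
      show ∑ i, ∑ j, (1 + (f x/((k:ℝ)+1))^2)⁻¹ * gradient f x i * W x i j *
          ((1 + (f x/((k:ℝ)+1))^2)⁻¹ * gradient f x j)
        ≤ ∑ i, ∑ j, gradient f x i * W x i j * gradient f x j
      rw [hs]
      have hc0 : (0:ℝ) < 1 + (f x/((k:ℝ)+1))^2 := by positivity
      have hc1 : (1 + (f x/((k:ℝ)+1))^2)⁻¹ ≤ 1 := by
        rw [inv_le_one_iff₀]
        right
        nlinarith [sq_nonneg (f x/((k:ℝ)+1))]
      have hc2 : (0:ℝ) ≤ (1 + (f x/((k:ℝ)+1))^2)⁻¹ := le_of_lt (by positivity)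
      have hc3 : ((1 + (f x/((k:ℝ)+1))^2)⁻¹)^2 ≤ 1 := by nlinarith
      calc ((1 + (f x/((k:ℝ)+1))^2)⁻¹)^2 * (∑ i, ∑ j, gradient f x i * W x i j * gradient f x j)
          ≤ 1 * (∑ i, ∑ j, gradient f x i * W x i j * gradient f x j) :=
            mul_le_mul_of_nonneg_right hc3 (hqnn x)
        _ = _ := one_mul _
  -- bounds on truncations
  have hbk : ∀ (k : ℕ) (x : E), |(((k:ℝ)+1) * Real.arctan (f x / ((k:ℝ)+1)))| ≤ ((k:ℝ)+1) * (Real.pi/2) := by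
    intro k x
    rw [abs_mul, abs_of_nonneg (by positivity : (0:ℝ) ≤ (k:ℝ)+1)]
    exact mul_le_mul_of_nonneg_left (harct _) (by positivity)
  have hcontk : ∀ k : ℕ, Continuous (fun x : E => (((k:ℝ)+1) * Real.arctan (f x / ((k:ℝ)+1)))) :=
    fun k => continuous_const.mul (Real.continuous_arctan.comp (hconti.div_const _))
  -- marginal integral identities
  have hmarg1 : ∀ F : E → ℝ, ∫ z : E × E, F z.1 ∂(μ.prod μ) = ∫ x, F x ∂μ := by
    intro F
    have h2 := integral_prod_mul (μ := μ) (ν := μ) F (fun _ => (1:ℝ))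
    simpa using h2
  have hmarg2 : ∀ F : E → ℝ, ∫ z : E × E, F z.2 ∂(μ.prod μ) = ∫ x, F x ∂μ := by
    intro F
    have h2 := integral_prod_mul (μ := μ) (ν := μ) (fun _ => (1:ℝ)) F
    simpa using h2
  -- integral of squared differences of truncations over the product
  have hHK : ∀ k : ℕ, ∫ z : E × E, ((((k:ℝ)+1) * Real.arctan (f z.1 / ((k:ℝ)+1))) - (((k:ℝ)+1) * Real.arctan (f z.2 / ((k:ℝ)+1))))^2 ∂(μ.prod μ) ≤ 4*K := by
    intro k
    have hF1 : Integrable (fun z : E × E => ((((k:ℝ)+1) * Real.arctan (f z.1 / ((k:ℝ)+1))) - (∫ y, ((k:ℝ)+1) * Real.arctan (f y / ((k:ℝ)+1)) ∂μ))^2) (μ.prod μ) := by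
      refine bounded_integrable (μ.prod μ)
        ((((hcontk k).comp continuous_fst).sub continuous_const).pow 2)
        (M := (((k:ℝ)+1) * (Real.pi/2) + |(∫ y, ((k:ℝ)+1) * Real.arctan (f y / ((k:ℝ)+1)) ∂μ)|)^2) fun z => ?_
      rw [abs_of_nonneg (sq_nonneg _)]
      have h5 := abs_add_le ((((k:ℝ)+1) * Real.arctan (f z.1 / ((k:ℝ)+1)))) (-((∫ y, ((k:ℝ)+1) * Real.arctan (f y / ((k:ℝ)+1)) ∂μ)))
      rw [abs_neg] at h5
      have h6 := (hbk k z.1)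
      have h7 : |(((k:ℝ)+1) * Real.arctan (f z.1 / ((k:ℝ)+1))) - (∫ y, ((k:ℝ)+1) * Real.arctan (f y / ((k:ℝ)+1)) ∂μ)| ≤ ((k:ℝ)+1) * (Real.pi/2) + |(∫ y, ((k:ℝ)+1) * Real.arctan (f y / ((k:ℝ)+1)) ∂μ)| := by
        rw [sub_eq_add_neg]
        exact h5.trans (by linarith)
      calc ((((k:ℝ)+1) * Real.arctan (f z.1 / ((k:ℝ)+1))) - (∫ y, ((k:ℝ)+1) * Real.arctan (f y / ((k:ℝ)+1)) ∂μ))^2 = |(((k:ℝ)+1) * Real.arctan (f z.1 / ((k:ℝ)+1))) - (∫ y, ((k:ℝ)+1) * Real.arctan (f y / ((k:ℝ)+1)) ∂μ)|^2 := (sq_abs _).symm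
        _ ≤ (((k:ℝ)+1) * (Real.pi/2) + |(∫ y, ((k:ℝ)+1) * Real.arctan (f y / ((k:ℝ)+1)) ∂μ)|)^2 := by
            have h8 : (0:ℝ) ≤ |(((k:ℝ)+1) * Real.arctan (f z.1 / ((k:ℝ)+1))) - (∫ y, ((k:ℝ)+1) * Real.arctan (f y / ((k:ℝ)+1)) ∂μ)| := abs_nonneg _
            nlinarith
    have hF2 : Integrable (fun z : E × E => ((((k:ℝ)+1) * Real.arctan (f z.2 / ((k:ℝ)+1))) - (∫ y, ((k:ℝ)+1) * Real.arctan (f y / ((k:ℝ)+1)) ∂μ))^2) (μ.prod μ) := by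
      refine bounded_integrable (μ.prod μ)
        ((((hcontk k).comp continuous_snd).sub continuous_const).pow 2)
        (M := (((k:ℝ)+1) * (Real.pi/2) + |(∫ y, ((k:ℝ)+1) * Real.arctan (f y / ((k:ℝ)+1)) ∂μ)|)^2) fun z => ?_
      rw [abs_of_nonneg (sq_nonneg _)]
      have h5 := abs_add_le ((((k:ℝ)+1) * Real.arctan (f z.2 / ((k:ℝ)+1)))) (-((∫ y, ((k:ℝ)+1) * Real.arctan (f y / ((k:ℝ)+1)) ∂μ)))
      rw [abs_neg] at h5
      have h6 := (hbk k z.2)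
      have h7 : |(((k:ℝ)+1) * Real.arctan (f z.2 / ((k:ℝ)+1))) - (∫ y, ((k:ℝ)+1) * Real.arctan (f y / ((k:ℝ)+1)) ∂μ)| ≤ ((k:ℝ)+1) * (Real.pi/2) + |(∫ y, ((k:ℝ)+1) * Real.arctan (f y / ((k:ℝ)+1)) ∂μ)| := by
        rw [sub_eq_add_neg]
        exact h5.trans (by linarith)
      calc ((((k:ℝ)+1) * Real.arctan (f z.2 / ((k:ℝ)+1))) - (∫ y, ((k:ℝ)+1) * Real.arctan (f y / ((k:ℝ)+1)) ∂μ))^2 = |(((k:ℝ)+1) * Real.arctan (f z.2 / ((k:ℝ)+1))) - (∫ y, ((k:ℝ)+1) * Real.arctan (f y / ((k:ℝ)+1)) ∂μ)|^2 := (sq_abs _).symm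
        _ ≤ (((k:ℝ)+1) * (Real.pi/2) + |(∫ y, ((k:ℝ)+1) * Real.arctan (f y / ((k:ℝ)+1)) ∂μ)|)^2 := by
            have h8 : (0:ℝ) ≤ |(((k:ℝ)+1) * Real.arctan (f z.2 / ((k:ℝ)+1))) - (∫ y, ((k:ℝ)+1) * Real.arctan (f y / ((k:ℝ)+1)) ∂μ)| := abs_nonneg _
            nlinarith
    have hdom : Integrable (fun z : E × E =>
        2 * ((((k:ℝ)+1) * Real.arctan (f z.1 / ((k:ℝ)+1))) - (∫ y, ((k:ℝ)+1) * Real.arctan (f y / ((k:ℝ)+1)) ∂μ))^2 + 2 * ((((k:ℝ)+1) * Real.arctan (f z.2 / ((k:ℝ)+1))) - (∫ y, ((k:ℝ)+1) * Real.arctan (f y / ((k:ℝ)+1)) ∂μ))^2) (μ.prod μ) :=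
      (hF1.const_mul 2).add (hF2.const_mul 2)
    have hle : ∫ z : E × E, ((((k:ℝ)+1) * Real.arctan (f z.1 / ((k:ℝ)+1))) - (((k:ℝ)+1) * Real.arctan (f z.2 / ((k:ℝ)+1))))^2 ∂(μ.prod μ)
        ≤ ∫ z : E × E, (2 * ((((k:ℝ)+1) * Real.arctan (f z.1 / ((k:ℝ)+1))) - (∫ y, ((k:ℝ)+1) * Real.arctan (f y / ((k:ℝ)+1)) ∂μ))^2 + 2 * ((((k:ℝ)+1) * Real.arctan (f z.2 / ((k:ℝ)+1))) - (∫ y, ((k:ℝ)+1) * Real.arctan (f y / ((k:ℝ)+1)) ∂μ))^2) ∂(μ.prod μ) := by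
      refine integral_mono_of_nonneg (Eventually.of_forall fun z => sq_nonneg _) hdom
        (Eventually.of_forall fun z => ?_)
      nlinarith [sq_nonneg ((((k:ℝ)+1) * Real.arctan (f z.1 / ((k:ℝ)+1))) + (((k:ℝ)+1) * Real.arctan (f z.2 / ((k:ℝ)+1))) - 2*(∫ y, ((k:ℝ)+1) * Real.arctan (f y / ((k:ℝ)+1)) ∂μ))]
    refine hle.trans ?_
    rw [integral_add (hF1.const_mul 2) (hF2.const_mul 2),
      integral_const_mul 2 (fun z : E × E => ((((k:ℝ)+1) * Real.arctan (f z.1 / ((k:ℝ)+1))) - (∫ y, ((k:ℝ)+1) * Real.arctan (f y / ((k:ℝ)+1)) ∂μ))^2),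
      integral_const_mul 2 (fun z : E × E => ((((k:ℝ)+1) * Real.arctan (f z.2 / ((k:ℝ)+1))) - (∫ y, ((k:ℝ)+1) * Real.arctan (f y / ((k:ℝ)+1)) ∂μ))^2),
      hmarg1 (fun x => ((((k:ℝ)+1) * Real.arctan (f x / ((k:ℝ)+1))) - (∫ y, ((k:ℝ)+1) * Real.arctan (f y / ((k:ℝ)+1)) ∂μ))^2), hmarg2 (fun x => ((((k:ℝ)+1) * Real.arctan (f x / ((k:ℝ)+1))) - (∫ y, ((k:ℝ)+1) * Real.arctan (f y / ((k:ℝ)+1)) ∂μ))^2)]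
    have h9 := hVk k
    linarith
  -- pointwise convergence of truncations
  have htend : ∀ t : ℝ, Filter.Tendsto (fun k : ℕ => ((k:ℝ)+1) * Real.arctan (t / ((k:ℝ)+1)))
      Filter.atTop (nhds t) := by
    intro t
    rcases eq_or_ne t 0 with rfl|ht
    · simpa [Real.arctan_zero] using (tendsto_const_nhds :
        Filter.Tendsto (fun _ : ℕ => (0:ℝ)) Filter.atTop (nhds 0))
    · have hdenom : Filter.Tendsto (fun k : ℕ => ((k:ℝ)+1)) Filter.atTop Filter.atTop :=
        Filter.tendsto_atTop_add_const_right _ 1 tendsto_natCast_atTop_atTop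
      have h0 : Filter.Tendsto (fun k : ℕ => t / ((k:ℝ)+1)) Filter.atTop (nhds 0) :=
        Filter.Tendsto.div_atTop tendsto_const_nhds hdenom
      have h0' : Filter.Tendsto (fun k : ℕ => t / ((k:ℝ)+1)) Filter.atTop (nhdsWithin 0 {(0:ℝ)}ᶜ) := by
        rw [tendsto_nhdsWithin_iff]
        exact ⟨h0, Eventually.of_forall fun k => by
          simp only [Set.mem_compl_iff, Set.mem_singleton_iff]
          exact div_ne_zero ht (hknz k)⟩
      have harc : Filter.Tendsto (fun s : ℝ => s⁻¹ * Real.arctan s) (nhdsWithin 0 {(0:ℝ)}ᶜ)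
          (nhds 1) := by
        have h1 := hasDerivAt_iff_tendsto_slope_zero.mp (Real.hasDerivAt_arctan 0)
        norm_num at h1
        simpa [smul_eq_mul] using h1
      have h3 := harc.comp h0'
      have h4 := h3.const_mul t
      rw [mul_one] at h4
      refine h4.congr fun k => ?_
      rw [Function.comp]
      rw [inv_div]
      field_simp
  -- Fatou over the product measure
  have hintK : Integrable (fun z : E × E => (f z.1 - f z.2)^2) (μ.prod μ) := by
    have hmeasH : ∀ k : ℕ, Measurable fun z : E × E =>
        ENNReal.ofReal (((((k:ℝ)+1) * Real.arctan (f z.1 / ((k:ℝ)+1))) - (((k:ℝ)+1) * Real.arctan (f z.2 / ((k:ℝ)+1))))^2) := by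
      intro k
      exact ENNReal.measurable_ofReal.comp
        (((((hcontk k).comp continuous_fst).sub ((hcontk k).comp continuous_snd)).pow 2).measurable)
    have hHkInt : ∀ k : ℕ, Integrable (fun z : E × E =>
        ((((k:ℝ)+1) * Real.arctan (f z.1 / ((k:ℝ)+1))) - (((k:ℝ)+1) * Real.arctan (f z.2 / ((k:ℝ)+1))))^2) (μ.prod μ) := by
      intro k
      refine bounded_integrable (μ.prod μ)
        ((((hcontk k).comp continuous_fst).sub ((hcontk k).comp continuous_snd)).pow 2)
        (M := (2*(((k:ℝ)+1) * (Real.pi/2)))^2) fun z => ?_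
      rw [abs_of_nonneg (sq_nonneg _)]
      have h5 := abs_add_le ((((k:ℝ)+1) * Real.arctan (f z.1 / ((k:ℝ)+1)))) (-((((k:ℝ)+1) * Real.arctan (f z.2 / ((k:ℝ)+1)))))
      rw [abs_neg] at h5
      have h6 := hbk k z.1
      have h6' := hbk k z.2
      have h7 : |(((k:ℝ)+1) * Real.arctan (f z.1 / ((k:ℝ)+1))) - (((k:ℝ)+1) * Real.arctan (f z.2 / ((k:ℝ)+1)))| ≤ 2*(((k:ℝ)+1) * (Real.pi/2)) := by
        rw [sub_eq_add_neg]
        exact h5.trans (by linarith)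
      calc ((((k:ℝ)+1) * Real.arctan (f z.1 / ((k:ℝ)+1))) - (((k:ℝ)+1) * Real.arctan (f z.2 / ((k:ℝ)+1))))^2 = |(((k:ℝ)+1) * Real.arctan (f z.1 / ((k:ℝ)+1))) - (((k:ℝ)+1) * Real.arctan (f z.2 / ((k:ℝ)+1)))|^2 := (sq_abs _).symm
        _ ≤ (2*(((k:ℝ)+1) * (Real.pi/2)))^2 := by
            have h8 : (0:ℝ) ≤ |(((k:ℝ)+1) * Real.arctan (f z.1 / ((k:ℝ)+1))) - (((k:ℝ)+1) * Real.arctan (f z.2 / ((k:ℝ)+1)))| := abs_nonneg _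
            nlinarith
    have hlin : ∀ k : ℕ, ∫⁻ z, ENNReal.ofReal (((((k:ℝ)+1) * Real.arctan (f z.1 / ((k:ℝ)+1))) - (((k:ℝ)+1) * Real.arctan (f z.2 / ((k:ℝ)+1))))^2) ∂(μ.prod μ)
        ≤ ENNReal.ofReal (4*K) := by
      intro k
      rw [← ofReal_integral_eq_lintegral_ofReal (hHkInt k)
        (Eventually.of_forall fun z => sq_nonneg _)]
      exact ENNReal.ofReal_le_ofReal (hHK k)
    have hpt : ∀ z : E × E,
        Filter.liminf (fun k : ℕ => ENNReal.ofReal (((((k:ℝ)+1) * Real.arctan (f z.1 / ((k:ℝ)+1))) - (((k:ℝ)+1) * Real.arctan (f z.2 / ((k:ℝ)+1))))^2))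
          Filter.atTop = ENNReal.ofReal ((f z.1 - f z.2)^2) := by
      intro z
      apply Filter.Tendsto.liminf_eq
      have ht1 : Filter.Tendsto (fun k : ℕ => ((((k:ℝ)+1) * Real.arctan (f z.1 / ((k:ℝ)+1))) - (((k:ℝ)+1) * Real.arctan (f z.2 / ((k:ℝ)+1))))^2)
          Filter.atTop (nhds ((f z.1 - f z.2)^2)) :=
        ((htend (f z.1)).sub (htend (f z.2))).pow 2
      exact (ENNReal.continuous_ofReal.tendsto _).comp ht1
    have hfin : ∫⁻ z, ENNReal.ofReal ((f z.1 - f z.2)^2) ∂(μ.prod μ) ≤ ENNReal.ofReal (4*K) := by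
      calc ∫⁻ z, ENNReal.ofReal ((f z.1 - f z.2)^2) ∂(μ.prod μ)
          = ∫⁻ z, Filter.liminf (fun k : ℕ =>
              ENNReal.ofReal (((((k:ℝ)+1) * Real.arctan (f z.1 / ((k:ℝ)+1))) - (((k:ℝ)+1) * Real.arctan (f z.2 / ((k:ℝ)+1))))^2)) Filter.atTop ∂(μ.prod μ) :=
            lintegral_congr fun z => (hpt z).symm
        _ ≤ Filter.liminf (fun k : ℕ => ∫⁻ z,
              ENNReal.ofReal (((((k:ℝ)+1) * Real.arctan (f z.1 / ((k:ℝ)+1))) - (((k:ℝ)+1) * Real.arctan (f z.2 / ((k:ℝ)+1))))^2) ∂(μ.prod μ)) Filter.atTop :=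
            lintegral_liminf_le hmeasH
        _ ≤ ENNReal.ofReal (4*K) :=
            Filter.liminf_le_of_frequently_le' (Filter.Frequently.of_forall hlin)
    refine ⟨(((hconti.comp continuous_fst).sub (hconti.comp continuous_snd)).pow 2).aestronglyMeasurable, ?_⟩
    rw [hasFiniteIntegral_iff_ofReal (Eventually.of_forall fun z => sq_nonneg _)]
    exact lt_of_le_of_lt hfin ENNReal.ofReal_lt_top
  -- extract a section
  obtain ⟨x₀, hx₀⟩ : ∃ x₀ : E, Integrable (fun y => (f x₀ - f y)^2) μ := by
    haveI : (ae μ).NeBot := ae_neBot.mpr (IsProbabilityMeasure.ne_zero μ)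
    exact hintK.prod_right_ae.exists
  have h2 : MemLp (fun y => f x₀ - f y) 2 μ :=
    (memLp_two_iff_integrable_sq ((continuous_const.sub hconti).aestronglyMeasurable)).mpr hx₀
  have hf2 : MemLp f 2 μ := by
    have h3 := (memLp_const (f x₀)).sub h2
    have h4 : ((fun _ : E => f x₀) - fun y : E => f x₀ - f y) = f := by
      funext y
      simp [Pi.sub_apply]
    rwa [h4] at h3
  have hg2 : MemLp (fun x => f x - ∫ y, f y ∂μ) 2 μ := hf2.sub (memLp_const _)
  exact hg2.integrable_sq

end SteinAux

open SteinAux in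
/-- If `μ` is centered with invertible covariance `Cov_μ` and `W` is a PSD
Stein kernel of `μ` satisfying the Riemannian Poincaré inequality with constant `1`, then
for any smooth `f`:
`(∫ W∇f dμ)ᵀ Cov_μ⁻¹ (∫ W∇f dμ) ≤ Var_μ(f) ≤ ∫ ∇fᵀ W ∇f dμ`. -/
theorem stein_kernel_variance_bounds
    {d : ℕ}
    (μ : Measure (EuclideanSpace ℝ (Fin d))) [IsProbabilityMeasure μ]
    (W : EuclideanSpace ℝ (Fin d) → Matrix (Fin d) (Fin d) ℝ)
    (hW : ∀ x, (W x).PosSemidef)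
    -- μ is centered
    (hmean : ∀ i, ∫ x, x i ∂μ = 0)
    (Cov : Matrix (Fin d) (Fin d) ℝ)
    (hCov : ∀ i j, Cov i j = ∫ x, x i * x j ∂μ)
    (hCovInt : ∀ i j, Integrable (fun x => x i * x j) μ)
    (hCovInv : IsUnit Cov.det)
    -- W is a Stein kernel of μ
    (hStein : ∀ f : EuclideanSpace ℝ (Fin d) → ℝ, ContDiff ℝ (⊤ : ℕ∞) f →
      ∀ i, ∫ x, x i * f x ∂μ = ∫ x, ∑ j, W x i j * gradient f x j ∂μ)
    -- Riemannian Poincaré inequality with constant 1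
    (hPoin : ∀ f : EuclideanSpace ℝ (Fin d) → ℝ, ContDiff ℝ (⊤ : ℕ∞) f →
      ∫ x, (f x - ∫ y, f y ∂μ) ^ 2 ∂μ ≤
        ∫ x, ∑ i, ∑ j, gradient f x i * W x i j * gradient f x j ∂μ) :
    ∀ f : EuclideanSpace ℝ (Fin d) → ℝ, ContDiff ℝ (⊤ : ℕ∞) f →
      (∑ i, ∑ j, (∫ x, ∑ k, W x i k * gradient f x k ∂μ) * Cov⁻¹ i j *
          (∫ x, ∑ k, W x j k * gradient f x k ∂μ)) ≤
        ∫ x, (f x - ∫ y, f y ∂μ) ^ 2 ∂μ ∧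
      ∫ x, (f x - ∫ y, f y ∂μ) ^ 2 ∂μ ≤
        ∫ x, ∑ i, ∑ j, gradient f x i * W x i j * gradient f x j ∂μ := by
  intro f hf
  refine ⟨?_, hPoin f hf⟩
  classical
  set m := ∫ y, f y ∂μ with hm
  have hrw : ∀ i, (∫ x, ∑ k, W x i k * gradient f x k ∂μ) = ∫ x, x i * f x ∂μ :=
    fun i => (hStein f hf i).symm
  simp only [hrw]
  set α : Fin d → ℝ := fun i => ∑ j, Cov⁻¹ i j * (∫ x, x j * f x ∂μ) with hα
  have hCB : Cov * Cov⁻¹ = 1 := Matrix.mul_nonsing_inv _ hCovInv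
  have hkey : ∀ i, (∑ j, Cov i j * α j) = (∫ x, x i * f x ∂μ) := by
    intro i
    simp only [hα]
    have h1 : ∀ j, Cov i j * (∑ k, Cov⁻¹ j k * (∫ x, x k * f x ∂μ))
        = ∑ k, Cov i j * Cov⁻¹ j k * (∫ x, x k * f x ∂μ) := by
      intro j; rw [Finset.mul_sum]; exact Finset.sum_congr rfl fun k _ => by ring
    rw [Finset.sum_congr rfl fun j _ => h1 j, Finset.sum_comm]
    have h2 : ∀ k, (∑ j, Cov i j * Cov⁻¹ j k * (∫ x, x k * f x ∂μ))
        = (Cov * Cov⁻¹) i k * (∫ x, x k * f x ∂μ) := by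
      intro k; rw [Matrix.mul_apply, Finset.sum_mul]
    rw [Finset.sum_congr rfl fun k _ => h2 k, hCB]
    simp [Matrix.one_apply]
  have hgoal : (∑ i, ∑ j, (∫ x, x i * f x ∂μ) * Cov⁻¹ i j * (∫ x, x j * f x ∂μ))
      = ∑ i, α i * (∫ x, x i * f x ∂μ) := by
    simp only [hα]
    refine Finset.sum_congr rfl fun i _ => ?_
    rw [Finset.sum_mul]
    exact Finset.sum_congr rfl fun j _ => by ring
  rw [hgoal]
  -- basic integrability of coordinates
  have hxim : ∀ i, Continuous (fun x : EuclideanSpace ℝ (Fin d) => x i) :=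
    fun i => (EuclideanSpace.proj (𝕜 := ℝ) i).continuous
  have hxi1 : ∀ i, Integrable (fun x : EuclideanSpace ℝ (Fin d) => x i) μ := by
    intro i
    have hd : Integrable (fun x : EuclideanSpace ℝ (Fin d) => (x i * x i + 1)/2) μ :=
      ((hCovInt i i).add (integrable_const 1)).div_const 2
    refine hd.mono' (hxim i).aestronglyMeasurable (Eventually.of_forall fun x => ?_)
    rw [Real.norm_eq_abs]
    nlinarith [abs_mul_abs_self (x i), sq_nonneg (|x i| - 1), abs_nonneg (x i)]
  have huu_eq : (fun x : EuclideanSpace ℝ (Fin d) => (∑ i, α i * x i) * (∑ i, α i * x i))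
      = fun x => ∑ i, ∑ j, (α i * α j) * (x i * x j) := by
    funext x
    rw [Finset.sum_mul_sum]
    exact Finset.sum_congr rfl fun i _ => Finset.sum_congr rfl fun j _ => by ring
  have huu : Integrable (fun x : EuclideanSpace ℝ (Fin d) =>
      (∑ i, α i * x i) * (∑ i, α i * x i)) μ := by
    rw [huu_eq]
    exact integrable_finset_sum _ fun i _ =>
      integrable_finset_sum _ fun j _ => ((hCovInt i j).const_mul _)
  have hTu_eq : ∫ x, (∑ i, α i * x i) * (∑ i, α i * x i) ∂μ = ∑ i, α i * (∫ x, x i * f x ∂μ) := by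
    rw [huu_eq, integral_finset_sum _ (fun i _ =>
      integrable_finset_sum _ fun j _ => ((hCovInt i j).const_mul _))]
    have h1 : ∀ i, ∫ x, ∑ j, (α i * α j) * (x i * x j) ∂μ = ∑ j, (α i * α j) * Cov i j := by
      intro i
      rw [integral_finset_sum _ (fun j _ => (hCovInt i j).const_mul _)]
      exact Finset.sum_congr rfl fun j _ => by rw [integral_const_mul, ← hCov i j]
    rw [Finset.sum_congr rfl fun i _ => h1 i]
    refine Finset.sum_congr rfl fun i _ => ?_
    rw [← hkey i, Finset.mul_sum]
    exact Finset.sum_congr rfl fun j _ => by ring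
  by_cases hg2 : Integrable (fun x => (f x - m)^2) μ
  · -- Cauchy–Schwarz case
    have hmg : AEStronglyMeasurable (fun x : EuclideanSpace ℝ (Fin d) => f x - m) μ :=
      (hf.continuous.sub continuous_const).aestronglyMeasurable
    have hgg : Integrable (fun x => (f x - m) * (f x - m)) μ := by
      have h1 : (fun x : EuclideanSpace ℝ (Fin d) => (f x - m) * (f x - m))
          = fun x => (f x - m)^2 := by funext x; ring
      rw [h1]; exact hg2
    have hxig : ∀ i, Integrable (fun x => x i * (f x - m)) μ := fun i =>
      mul_integrable_of_sq μ (hCovInt i i) hgg (hxim i).aestronglyMeasurable hmg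
    have hxif : ∀ i, Integrable (fun x => x i * f x) μ := by
      intro i
      have h1 : (fun x : EuclideanSpace ℝ (Fin d) => x i * f x)
          = fun x => x i * (f x - m) + m * x i := by funext x; ring
      rw [h1]; exact (hxig i).add ((hxi1 i).const_mul m)
    have hvig : ∀ i, ∫ x, x i * (f x - m) ∂μ = (∫ x, x i * f x ∂μ) := by
      intro i
      have h1 : (fun x : EuclideanSpace ℝ (Fin d) => x i * (f x - m))
          = fun x => x i * f x - m * x i := by funext x; ring
      rw [h1, integral_sub (hxif i) ((hxi1 i).const_mul m), integral_const_mul, hmean i,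
        mul_zero, sub_zero]
    have hugInt : Integrable (fun x => (∑ i, α i * x i) * (f x - m)) μ := by
      have h1 : (fun x : EuclideanSpace ℝ (Fin d) => (∑ i, α i * x i) * (f x - m))
          = fun x => ∑ i, α i * (x i * (f x - m)) := by
        funext x; rw [Finset.sum_mul]; exact Finset.sum_congr rfl fun i _ => by ring
      rw [h1]; exact integrable_finset_sum _ fun i _ => (hxig i).const_mul _
    have hug_eq : ∫ x, (∑ i, α i * x i) * (f x - m) ∂μ = ∑ i, α i * (∫ x, x i * f x ∂μ) := by
      have h1 : (fun x : EuclideanSpace ℝ (Fin d) => (∑ i, α i * x i) * (f x - m))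
          = fun x => ∑ i, α i * (x i * (f x - m)) := by
        funext x; rw [Finset.sum_mul]; exact Finset.sum_congr rfl fun i _ => by ring
      rw [h1, integral_finset_sum _ (fun i _ => (hxig i).const_mul _)]
      exact Finset.sum_congr rfl fun i _ => by rw [integral_const_mul, hvig i]
    have h0 : (0:ℝ) ≤ ∫ x, ((f x - m) - (∑ i, α i * x i))^2 ∂μ :=
      integral_nonneg fun x => sq_nonneg _
    have hexp : ∫ x, ((f x - m) - (∑ i, α i * x i))^2 ∂μ
        = (∫ x, (f x - m)^2 ∂μ) - 2 * (∑ i, α i * (∫ x, x i * f x ∂μ)) + (∑ i, α i * (∫ x, x i * f x ∂μ)) := by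
      have hpt : (fun x : EuclideanSpace ℝ (Fin d) => ((f x - m) - (∑ i, α i * x i))^2)
          = fun x => (f x - m)^2 + (-2) * ((∑ i, α i * x i) * (f x - m))
              + ((∑ i, α i * x i) * (∑ i, α i * x i)) := by funext x; ring
      have hI1 : Integrable (fun x : EuclideanSpace ℝ (Fin d) =>
          (f x - m)^2 + (-2) * ((∑ i, α i * x i) * (f x - m))) μ :=
        hg2.add (hugInt.const_mul _)
      rw [hpt, integral_add hI1 huu, integral_add hg2 (hugInt.const_mul _), integral_const_mul,
        hug_eq, hTu_eq]
      ring
    linarith [h0, hexp]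
  · -- degenerate case
    rw [integral_undef hg2]
    by_contra hlt
    push_neg at hlt
    have hu1 : Integrable (fun x : EuclideanSpace ℝ (Fin d) => ∑ i, α i * x i) μ :=
      integrable_finset_sum _ fun i _ => (hxi1 i).const_mul _
    have hu0 : ∫ x, (∑ i, α i * x i) ∂μ = 0 := by
      rw [integral_finset_sum _ (fun i _ => (hxi1 i).const_mul _)]
      refine Finset.sum_eq_zero fun i _ => ?_
      rw [integral_const_mul, hmean i, mul_zero]
    have hupos : 0 < ∫ x, (∑ i, α i * x i) * (∑ i, α i * x i) ∂μ := by
      rw [hTu_eq]; exact hlt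
    by_cases hq : Integrable (fun x => ∑ i, ∑ j, gradient f x i * W x i j * gradient f x j) μ
    · have h2a := SteinAux.aux2a μ W hW f hf hPoin hq
      rw [← hm] at h2a
      exact hg2 h2a
    · have hsplit : ¬ Integrable (fun x => (Real.cos (f x))^2 * (∑ i, ∑ j, gradient f x i * W x i j * gradient f x j)) μ
          ∨ ¬ Integrable (fun x => (Real.sin (f x))^2 * (∑ i, ∑ j, gradient f x i * W x i j * gradient f x j)) μ := by
        by_contra hb
        push_neg at hb
        apply hq
        have h1 : (fun x => ∑ i, ∑ j, gradient f x i * W x i j * gradient f x j)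
            = fun x => (Real.cos (f x))^2 * (∑ i, ∑ j, gradient f x i * W x i j * gradient f x j) + (Real.sin (f x))^2 * (∑ i, ∑ j, gradient f x i * W x i j * gradient f x j) := by
          funext x
          rw [← add_mul, Real.cos_sq_add_sin_sq, one_mul]
        rw [h1]
        exact hb.1.add hb.2
      rcases hsplit with hC | hC
      · exact SteinAux.aux2b μ W f hf hPoin α hu1 huu hu0 hupos Real.sin Real.cos
          Real.contDiff_sin (fun t => Real.hasDerivAt_sin t) 1
          (fun t => abs_le.mpr ⟨Real.neg_one_le_sin t, Real.sin_le_one t⟩) hC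
      · refine SteinAux.aux2b μ W f hf hPoin α hu1 huu hu0 hupos Real.cos
          (fun t => -Real.sin t) Real.contDiff_cos (fun t => Real.hasDerivAt_cos t) 1
          (fun t => abs_le.mpr ⟨Real.neg_one_le_cos t, Real.cos_le_one t⟩) ?_
        intro hI
        apply hC
        have h2 : (fun x => (Real.sin (f x))^2 * (∑ i, ∑ j, gradient f x i * W x i j * gradient f x j))
            = fun x => (-Real.sin (f x))^2 * (∑ i, ∑ j, gradient f x i * W x i j * gradient f x j) := by
          funext x; rw [neg_sq]
        rw [h2]
        exact hI
end
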